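/- arXiv:2409.20207 — 6 statements merged into one kernel-verified Lean document; each statement's English description precedes it below -/
import Mathlib

section
/- Suppose λ̄ ≥ 12‖E‖, δ_1 := λ_1 − λ_2 ≥ δ := max{ 12·r·x, 144·r·w²/λ̄ }, and 12·( ‖E‖/λ̄ + √r·x/δ_1 + √r·y/δ_1 ) < 1. Then λ_1 − λ̃_1 ≤ max{ 6·r·x, 72·r·w²/λ̄ }. -/
open Matrix

/-- Spectral (ℓ²-operator) norm of a real matrix. -/
noncomputable def matOpNorm {m n : ℕ} (M : Matrix (Fin m) (Fin n) ℝ) : ℝ :=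
  ‖LinearMap.toContinuousLinearMap (Matrix.toEuclideanLin M)‖

/-- Euclidean norm of a vector. -/
noncomputable def vecNorm {n : ℕ} (v : Fin n → ℝ) : ℝ := Real.sqrt (v ⬝ᵥ v)

/-- Corollary 4.1: lower perturbation bound for the largest eigenvalue. -/
theorem largest_eigenvalue_lower_perturbation
    {n : ℕ} (hn : 2 ≤ n) (A E : Matrix (Fin n) (Fin n) ℝ)
    (lam tlam : Fin n → ℝ) (u tu : Fin n → (Fin n → ℝ))
    (hA : A.IsSymm) (hE : E.IsSymm)
    (hlam : Antitone lam) (htlam : Antitone tlam)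
    (hu : ∀ i j, u i ⬝ᵥ u j = if i = j then (1 : ℝ) else 0)
    (htu : ∀ i j, tu i ⬝ᵥ tu j = if i = j then (1 : ℝ) else 0)
    (hAu : ∀ i, A *ᵥ u i = lam i • u i)
    (hAtu : ∀ i, (A + E) *ᵥ tu i = tlam i • tu i)
    (lambar : ℝ) (hlambar : 0 < lambar)
    (hlambarE : 12 * matOpNorm E ≤ lambar)
    -- r = max{ i : λ_1 − λ_i ≤ λ̄ } :
    (r : ℕ) (hrn : r ≤ n)
    (hrchar : ∀ i : Fin n, (i : ℕ) < r ↔ lam ⟨0, by omega⟩ - lam i ≤ lambar)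
    (x y w : ℝ)
    (hx : IsLUB (insert (0 : ℝ)
      {t | ∃ i j : Fin n, (i : ℕ) < r ∧ (j : ℕ) < r ∧ t = |u i ⬝ᵥ (E *ᵥ u j)|}) x)
    (hy : IsLUB (insert (0 : ℝ)
      {t | ∃ i j : Fin n, i ≠ j ∧ (i : ℕ) < r ∧ (j : ℕ) < r ∧
        t = |u i ⬝ᵥ (E *ᵥ ((∑ l ∈ Finset.univ.filter (fun l : Fin n => r ≤ (l : ℕ)),
          (lam ⟨0, by omega⟩ - lam l)⁻¹ • vecMulVec (u l) (u l)) *ᵥ (E *ᵥ u j)))|}) y)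
    (hw : IsLUB (insert (0 : ℝ)
      {t | ∃ i : Fin n, (i : ℕ) < r ∧ t = vecNorm (E *ᵥ u i)}) w)
    -- δ_1 = λ_1 − λ_2 ≥ δ := max{12rx, 144rw²/λ̄} :
    (hδ1 : max (12 * r * x) (144 * r * w ^ 2 / lambar) ≤
      lam ⟨0, by omega⟩ - lam ⟨1, by omega⟩)
    (hcond : 12 * (matOpNorm E / lambar +
        Real.sqrt r * x / (lam ⟨0, by omega⟩ - lam ⟨1, by omega⟩) +
        Real.sqrt r * y / (lam ⟨0, by omega⟩ - lam ⟨1, by omega⟩)) < 1) :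
    lam ⟨0, by omega⟩ - tlam ⟨0, by omega⟩ ≤
      max (6 * r * x) (72 * r * w ^ 2 / lambar) := by
  have h0n : 0 < n := by omega
  set i0 : Fin n := ⟨0, by omega⟩ with hi0
  -- r ≥ 1
  have hrpos : 0 < r := by
    have := (hrchar i0).mpr (by simp; linarith)
    simpa using this
  -- x ≥ 0
  have hx0 : 0 ≤ x := hx.1 (Set.mem_insert 0 _)
  -- |u 0 ⬝ E u 0| ≤ x
  have hxmem : |u i0 ⬝ᵥ (E *ᵥ u i0)| ≤ x :=
    hx.1 (Set.mem_insert_iff.mpr (Or.inr ⟨i0, i0, by simpa using hrpos, by simpa using hrpos, rfl⟩))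
  -- orthonormal matrix of tu rows
  set U : Matrix (Fin n) (Fin n) ℝ := Matrix.of tu with hU
  have hUUt : U * Uᵀ = 1 := by
    ext i j
    simp only [Matrix.mul_apply, Matrix.transpose_apply, Matrix.one_apply, hU, Matrix.of_apply]
    simpa [dotProduct] using htu i j
  have hUtU : Uᵀ * U = 1 := mul_eq_one_comm.mp hUUt
  set u0 : Fin n → ℝ := u i0 with hu0
  set c : Fin n → ℝ := fun i => tu i ⬝ᵥ u0 with hc
  have hUv : U *ᵥ u0 = c := by
    ext i; simp [hU, hc, Matrix.mulVec, dotProduct]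
  have hexp : Uᵀ *ᵥ c = u0 := by
    rw [← hUv, Matrix.mulVec_mulVec, hUtU, Matrix.one_mulVec]
  have hsumsq : ∑ i, c i ^ 2 = 1 := by
    have h1 : u0 ⬝ᵥ u0 = 1 := by simpa [hu0] using hu i0 i0
    have h2 : u0 ⬝ᵥ (Uᵀ *ᵥ c) = 1 := by rw [hexp, h1]
    rw [Matrix.dotProduct_mulVec, Matrix.vecMul_transpose, hUv] at h2
    rw [← h2]
    simp [dotProduct, sq]
  have hAEU : (A + E) * Uᵀ = Uᵀ * Matrix.diagonal tlam := by
    ext i j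
    rw [Matrix.mul_apply, Matrix.mul_diagonal]
    have h := congrFun (hAtu j) i
    simpa [Matrix.mulVec, dotProduct, Matrix.transpose_apply, hU, mul_comm] using h
  -- quadratic form expansion
  have hquad : u0 ⬝ᵥ ((A + E) *ᵥ u0) = ∑ i, tlam i * c i ^ 2 := by
    have step : (A + E) *ᵥ u0 = Uᵀ *ᵥ (Matrix.diagonal tlam *ᵥ c) := by
      rw [← hexp, Matrix.mulVec_mulVec, hAEU, ← Matrix.mulVec_mulVec]
    rw [step, Matrix.dotProduct_mulVec, Matrix.vecMul_transpose, hUv]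
    simp only [dotProduct, Matrix.mulVec_diagonal]
    exact Finset.sum_congr rfl fun i _ => by ring
  -- Rayleigh bound
  have hray : u0 ⬝ᵥ ((A + E) *ᵥ u0) ≤ tlam i0 := by
    rw [hquad]
    calc ∑ i, tlam i * c i ^ 2 ≤ ∑ i, tlam i0 * c i ^ 2 := by
          refine Finset.sum_le_sum fun i _ => ?_
          exact mul_le_mul_of_nonneg_right (htlam (by simp [hi0, Fin.le_def])) (sq_nonneg _)
      _ = tlam i0 := by rw [← Finset.mul_sum, hsumsq, mul_one]
  -- expand LHS
  have hlhs : u0 ⬝ᵥ ((A + E) *ᵥ u0) = lam i0 + u0 ⬝ᵥ (E *ᵥ u0) := by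
    rw [Matrix.add_mulVec, dotProduct_add, hAu i0]
    have : u0 ⬝ᵥ (lam i0 • u0) = lam i0 := by
      rw [dotProduct_smul]
      have := hu i0 i0
      simp only [if_pos rfl] at this
      rw [hu0] at *
      simp [this]
    rw [← hu0, this]
  have key : lam i0 - tlam i0 ≤ x := by
    have habs : -(x) ≤ u0 ⬝ᵥ (E *ᵥ u0) := by
      have := abs_le.mp (le_trans (le_refl _) hxmem)
      linarith [this.1]
    linarith [hray, hlhs ▸ hray]
  have h6 : x ≤ 6 * r * x := by
    have : (1:ℝ) ≤ 6 * r := by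
      have : (1:ℝ) ≤ (r:ℝ) := by exact_mod_cast hrpos
      linarith
    nlinarith
  calc lam i0 - tlam i0 ≤ x := key
    _ ≤ 6 * r * x := h6
    _ ≤ max (6 * r * x) (72 * r * w ^ 2 / lambar) := le_max_left _ _
end

section
/- Suppose λ̄ ≥ 12‖E‖, δ_p := λ_p − λ_{p+1} ≥ δ := max{ 12·r·x, 144·r·w²/λ̄ }, and 12·( ‖E‖/λ̄ + √r·x/δ_p + √r·y/δ_p ) < 1. Then λ_p − λ̃_p ≤ max{ 6·r·x, 72·r·w²/λ̄ }. -/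
open Matrix

lemma dotProduct_sum' {n : ℕ} {ι : Type*} (s : Finset ι) (v : Fin n → ℝ)
    (g : ι → (Fin n → ℝ)) : v ⬝ᵥ (∑ i ∈ s, g i) = ∑ i ∈ s, v ⬝ᵥ g i := by
  simp only [dotProduct, Finset.sum_apply, Finset.mul_sum]
  exact Finset.sum_comm

lemma sum_dotProduct' {n : ℕ} {ι : Type*} (s : Finset ι) (v : Fin n → ℝ)
    (g : ι → (Fin n → ℝ)) : (∑ i ∈ s, g i) ⬝ᵥ v = ∑ i ∈ s, g i ⬝ᵥ v := by
  simp only [dotProduct, Finset.sum_apply, Finset.sum_mul]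
  exact Finset.sum_comm

lemma mulVec_sum' {n : ℕ} {ι : Type*} (s : Finset ι) (M : Matrix (Fin n) (Fin n) ℝ)
    (g : ι → (Fin n → ℝ)) : M *ᵥ (∑ i ∈ s, g i) = ∑ i ∈ s, M *ᵥ g i :=
  map_sum M.mulVecLin g s

/-- Orthonormal families (w.r.t. dot product) are linearly independent. -/
lemma ortho_linIndep {n m : ℕ} (f : Fin m → (Fin n → ℝ))
    (hf : ∀ i j, f i ⬝ᵥ f j = if i = j then (1 : ℝ) else 0) :
    LinearIndependent ℝ f := by
  rw [Fintype.linearIndependent_iff]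
  intro g hg j
  have : f j ⬝ᵥ (∑ i, g i • f i) = g j := by
    rw [dotProduct_sum']
    simp only [dotProduct_smul, hf, smul_eq_mul]
    simp [Finset.sum_ite_eq]
  rw [hg] at this
  simpa using this.symm

/-- Expansion of an element of the span of an orthonormal family. -/
lemma ortho_span_repr {n m : ℕ} (f : Fin m → (Fin n → ℝ))
    (hf : ∀ i j, f i ⬝ᵥ f j = if i = j then (1 : ℝ) else 0)
    {v : Fin n → ℝ} (hv : v ∈ Submodule.span ℝ (Set.range f)) :
    v = ∑ i, (f i ⬝ᵥ v) • f i := by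
  let L : (Fin n → ℝ) →ₗ[ℝ] (Fin n → ℝ) :=
    { toFun := fun w => ∑ i, (f i ⬝ᵥ w) • f i
      map_add' := by intro a b; simp [dotProduct_add, add_smul, Finset.sum_add_distrib]
      map_smul' := by
        intro c a
        simp [dotProduct_smul, smul_smul, Finset.smul_sum] }
  have key : Submodule.span ℝ (Set.range f) ≤ LinearMap.ker (L - LinearMap.id) := by
    rw [Submodule.span_le]
    rintro _ ⟨j, rfl⟩
    simp only [SetLike.mem_coe, LinearMap.mem_ker, LinearMap.sub_apply, LinearMap.id_apply,
      sub_eq_zero]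
    show ∑ i, (f i ⬝ᵥ f j) • f i = f j
    simp only [hf, ite_smul, one_smul, zero_smul]
    simp [Finset.sum_ite_eq]
  have := key hv
  simp only [LinearMap.mem_ker, LinearMap.sub_apply, LinearMap.id_apply, sub_eq_zero] at this
  exact this.symm

lemma quad_diag {n m : ℕ} (M : Matrix (Fin n) (Fin n) ℝ) (f : Fin m → (Fin n → ℝ))
    (hf : ∀ i j, f i ⬝ᵥ f j = if i = j then (1 : ℝ) else 0)
    (μ c : Fin m → ℝ) (hM : ∀ i, M *ᵥ f i = μ i • f i) :
    (∑ i, c i • f i) ⬝ᵥ (M *ᵥ ∑ i, c i • f i) = ∑ i, μ i * c i ^ 2 := by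
  rw [mulVec_sum']
  simp only [mulVec_smul, hM]
  rw [sum_dotProduct']
  simp only [dotProduct_sum', smul_dotProduct, dotProduct_smul, hf, smul_eq_mul, mul_ite,
    mul_one, mul_zero]
  simp only [Finset.sum_ite_eq, Finset.mem_univ, if_true]
  exact Finset.sum_congr rfl fun i _ => by ring

lemma ortho_norm_sq {n m : ℕ} (f : Fin m → (Fin n → ℝ))
    (hf : ∀ i j, f i ⬝ᵥ f j = if i = j then (1 : ℝ) else 0) (c : Fin m → ℝ) :
    (∑ i, c i • f i) ⬝ᵥ (∑ i, c i • f i) = ∑ i, c i ^ 2 := by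
  have := quad_diag (1 : Matrix (Fin n) (Fin n) ℝ) f hf (fun _ => 1) c
    (fun i => by rw [one_mulVec, one_smul])
  rw [one_mulVec] at this
  simpa using this

lemma quad_bound {n m : ℕ} (E : Matrix (Fin n) (Fin n) ℝ) (f : Fin m → (Fin n → ℝ))
    (c : Fin m → ℝ) (x : ℝ) (hx0 : 0 ≤ x) (hb : ∀ i j, |f i ⬝ᵥ (E *ᵥ f j)| ≤ x) :
    |(∑ i, c i • f i) ⬝ᵥ (E *ᵥ ∑ i, c i • f i)| ≤ m * x * ∑ i, c i ^ 2 := by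
  have expand : (∑ i, c i • f i) ⬝ᵥ (E *ᵥ ∑ i, c i • f i)
      = ∑ i, ∑ j, c i * c j * (f i ⬝ᵥ (E *ᵥ f j)) := by
    rw [mulVec_sum', sum_dotProduct']
    simp only [mulVec_smul, dotProduct_sum', smul_dotProduct, dotProduct_smul, smul_eq_mul]
    refine Finset.sum_congr rfl fun i _ => ?_
    rw [Finset.mul_sum]
    exact Finset.sum_congr rfl fun j _ => by ring
  rw [expand]
  have h1 : |∑ i, ∑ j, c i * c j * (f i ⬝ᵥ (E *ᵥ f j))|
      ≤ ∑ i, ∑ j, |c i| * |c j| * x := by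
    refine (Finset.abs_sum_le_sum_abs _ _).trans (Finset.sum_le_sum fun i _ => ?_)
    refine (Finset.abs_sum_le_sum_abs _ _).trans (Finset.sum_le_sum fun j _ => ?_)
    rw [abs_mul, abs_mul]
    exact mul_le_mul_of_nonneg_left (hb i j) (by positivity)
  have h2 : ∑ i, ∑ j : Fin m, |c i| * |c j| * x = (∑ i, |c i|) ^ 2 * x := by
    rw [sq, Finset.sum_mul_sum, Finset.sum_mul]
    exact Finset.sum_congr rfl fun i _ => by rw [Finset.sum_mul]
  have h3 : (∑ i, |c i|) ^ 2 ≤ m * ∑ i, c i ^ 2 := by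
    have := Finset.sum_mul_sq_le_sq_mul_sq Finset.univ (fun _ : Fin m => (1 : ℝ))
      (fun i => |c i|)
    simpa [sq_abs] using this
  calc |∑ i, ∑ j, c i * c j * (f i ⬝ᵥ (E *ᵥ f j))| ≤ (∑ i, |c i|) ^ 2 * x := by
        rw [← h2]; exact h1
    _ ≤ (m * ∑ i, c i ^ 2) * x := mul_le_mul_of_nonneg_right h3 hx0
    _ = m * x * ∑ i, c i ^ 2 := by ring

/-- Corollary 4.3: lower perturbation bound for the p-th eigenvalue. -/
theorem pth_eigenvalue_lower_perturbation
    {n : ℕ} (A E : Matrix (Fin n) (Fin n) ℝ)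
    (lam tlam : Fin n → ℝ) (u tu : Fin n → (Fin n → ℝ))
    (hA : A.IsSymm) (hE : E.IsSymm)
    (hlam : Antitone lam) (htlam : Antitone tlam)
    (hu : ∀ i j, u i ⬝ᵥ u j = if i = j then (1 : ℝ) else 0)
    (htu : ∀ i j, tu i ⬝ᵥ tu j = if i = j then (1 : ℝ) else 0)
    (hAu : ∀ i, A *ᵥ u i = lam i • u i)
    (hAtu : ∀ i, (A + E) *ᵥ tu i = tlam i • tu i)
    (p : ℕ) (hp1 : 1 ≤ p) (hpn : p < n)
    (lambar : ℝ) (hlambar : 0 < lambar)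
    (hlambarE : 12 * matOpNorm E ≤ lambar)
    -- r = max{ i : λ_p − λ_i ≤ λ̄ } :
    (r : ℕ) (hrn : r ≤ n)
    (hrchar : ∀ i : Fin n, (i : ℕ) < r ↔ lam ⟨p - 1, by omega⟩ - lam i ≤ lambar)
    (x y w : ℝ)
    (hx : IsLUB (insert (0 : ℝ)
      {t | ∃ i j : Fin n, (i : ℕ) < r ∧ (j : ℕ) < r ∧ t = |u i ⬝ᵥ (E *ᵥ u j)|}) x)
    (hy : IsLUB (insert (0 : ℝ)
      {t | ∃ i j k : Fin n, i ≠ j ∧ (i : ℕ) < r ∧ (j : ℕ) < r ∧ (k : ℕ) < p ∧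
        t = |u i ⬝ᵥ (E *ᵥ ((∑ l ∈ Finset.univ.filter (fun l : Fin n => r ≤ (l : ℕ)),
          (lam k - lam l)⁻¹ • vecMulVec (u l) (u l)) *ᵥ (E *ᵥ u j)))|}) y)
    (hw : IsLUB (insert (0 : ℝ)
      {t | ∃ i : Fin n, (i : ℕ) < r ∧ t = vecNorm (E *ᵥ u i)}) w)
    -- δ_p = λ_p − λ_{p+1} ≥ δ := max{12rx, 144rw²/λ̄} :
    (hδp : max (12 * r * x) (144 * r * w ^ 2 / lambar) ≤
      lam ⟨p - 1, by omega⟩ - lam ⟨p, hpn⟩)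
    (hcond : 12 * (matOpNorm E / lambar +
        Real.sqrt r * x / (lam ⟨p - 1, by omega⟩ - lam ⟨p, hpn⟩) +
        Real.sqrt r * y / (lam ⟨p - 1, by omega⟩ - lam ⟨p, hpn⟩)) < 1) :
    lam ⟨p - 1, by omega⟩ - tlam ⟨p - 1, by omega⟩ ≤
      max (6 * r * x) (72 * r * w ^ 2 / lambar) := by
  classical
  set q : Fin n := ⟨p - 1, by omega⟩ with hq
  -- p ≤ r
  have hpr : p ≤ r := by
    have h := (hrchar q).mpr (by simp only [sub_self]; linarith)
    have h2 : (q : ℕ) = p - 1 := rfl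
    omega
  have hx0 : 0 ≤ x := hx.1 (Set.mem_insert 0 _)
  -- the two orthonormal families
  let f : Fin p → (Fin n → ℝ) := fun i => u ⟨(i : ℕ), lt_trans i.isLt hpn⟩
  let g : Fin (n - (p - 1)) → (Fin n → ℝ) := fun i =>
    tu ⟨p - 1 + (i : ℕ), by have := i.isLt; omega⟩
  have hf : ∀ i j, f i ⬝ᵥ f j = if i = j then (1 : ℝ) else 0 := by
    intro i j
    simp only [f, hu]
    by_cases h : i = j
    · simp [h]
    · rw [if_neg h, if_neg]
      intro hc
      exact h (Fin.ext (by simpa using congrArg Fin.val hc))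
  have hg : ∀ i j, g i ⬝ᵥ g j = if i = j then (1 : ℝ) else 0 := by
    intro i j
    simp only [g, htu]
    by_cases h : i = j
    · simp [h]
    · rw [if_neg h, if_neg]
      intro hc
      have := congrArg Fin.val hc
      simp only [Fin.val_mk] at this
      exact h (Fin.ext (by omega))
  set S := Submodule.span ℝ (Set.range f) with hS
  set T := Submodule.span ℝ (Set.range g) with hT
  have hdS : Module.finrank ℝ S = p := by
    rw [hS, finrank_span_eq_card (ortho_linIndep f hf)]
    simp
  have hdT : Module.finrank ℝ T = n - (p - 1) := by
    rw [hT, finrank_span_eq_card (ortho_linIndep g hg)]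
    simp
  have hinf : 0 < Module.finrank ℝ ↥(S ⊓ T) := by
    have hsum := Submodule.finrank_sup_add_finrank_inf_eq S T
    have hle : Module.finrank ℝ ↥(S ⊔ T) ≤ n := by
      have h := Submodule.finrank_le (S ⊔ T)
      simpa [Module.finrank_fin_fun] using h
    omega
  obtain ⟨⟨v, hvmem⟩, hvne⟩ := Module.finrank_pos_iff_exists_ne_zero.mp hinf
  have hv0 : v ≠ 0 := fun h => hvne (Subtype.ext h)
  have hvS : v ∈ S := hvmem.1
  have hvT : v ∈ T := hvmem.2
  set c : Fin p → ℝ := fun i => f i ⬝ᵥ v with hc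
  set d : Fin (n - (p - 1)) → ℝ := fun i => g i ⬝ᵥ v with hd
  have hvc : v = ∑ i, c i • f i := ortho_span_repr f hf hvS
  have hvd : v = ∑ i, d i • g i := ortho_span_repr g hg hvT
  have hNc : v ⬝ᵥ v = ∑ i, c i ^ 2 := by
    conv_lhs => rw [hvc]
    exact ortho_norm_sq f hf c
  have hNd : v ⬝ᵥ v = ∑ i, d i ^ 2 := by
    conv_lhs => rw [hvd]
    exact ortho_norm_sq g hg d
  have hNnonneg : 0 ≤ v ⬝ᵥ v := by
    show 0 ≤ ∑ i, v i * v i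
    exact Finset.sum_nonneg fun i _ => mul_self_nonneg _
  have hNpos : 0 < v ⬝ᵥ v :=
    lt_of_le_of_ne hNnonneg (Ne.symm fun h => hv0 (dotProduct_self_eq_zero.mp h))
  -- quadratic form of A from below
  let lamf : Fin p → ℝ := fun i => lam ⟨(i : ℕ), lt_trans i.isLt hpn⟩
  have hAf : ∀ i, A *ᵥ f i = lamf i • f i := fun i => hAu _
  have hq1 : lam q * (v ⬝ᵥ v) ≤ v ⬝ᵥ (A *ᵥ v) := by
    have he : v ⬝ᵥ (A *ᵥ v) = ∑ i, lamf i * c i ^ 2 := by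
      conv_lhs => rw [hvc]
      exact quad_diag A f hf lamf c hAf
    rw [he, hNc, Finset.mul_sum]
    refine Finset.sum_le_sum fun i _ => ?_
    refine mul_le_mul_of_nonneg_right ?_ (sq_nonneg _)
    refine hlam ?_
    have := i.isLt
    exact Fin.mk_le_mk.mpr (by omega)
  -- quadratic form of A + E from above
  let tlamg : Fin (n - (p - 1)) → ℝ := fun i =>
    tlam ⟨p - 1 + (i : ℕ), by have := i.isLt; omega⟩
  have hAEg : ∀ i, (A + E) *ᵥ g i = tlamg i • g i := fun i => hAtu _
  have hq2 : v ⬝ᵥ ((A + E) *ᵥ v) ≤ tlam q * (v ⬝ᵥ v) := by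
    have he : v ⬝ᵥ ((A + E) *ᵥ v) = ∑ i, tlamg i * d i ^ 2 := by
      conv_lhs => rw [hvd]
      exact quad_diag (A + E) g hg tlamg d hAEg
    rw [he, hNd, Finset.mul_sum]
    refine Finset.sum_le_sum fun i _ => ?_
    refine mul_le_mul_of_nonneg_right ?_ (sq_nonneg _)
    refine htlam ?_
    exact Fin.mk_le_mk.mpr (by omega)
  -- quadratic form of E, bounded by x
  have hbE : ∀ i j : Fin p, |f i ⬝ᵥ (E *ᵥ f j)| ≤ x := by
    intro i j
    refine hx.1 (Set.mem_insert_of_mem _ ?_)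
    refine ⟨⟨(i : ℕ), lt_trans i.isLt hpn⟩, ⟨(j : ℕ), lt_trans j.isLt hpn⟩, ?_, ?_, rfl⟩
    · have := i.isLt; simpa using by omega
    · have := j.isLt; simpa using by omega
  have hq3 : |v ⬝ᵥ (E *ᵥ v)| ≤ p * x * (v ⬝ᵥ v) := by
    rw [hNc]
    conv_lhs => rw [hvc]
    exact quad_bound E f c x hx0 hbE
  -- combine
  have hsplit : v ⬝ᵥ ((A + E) *ᵥ v) = v ⬝ᵥ (A *ᵥ v) + v ⬝ᵥ (E *ᵥ v) := by
    rw [add_mulVec, dotProduct_add]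
  have habs := abs_le.mp hq3
  have hkey : (lam q - tlam q) * (v ⬝ᵥ v) ≤ (p * x) * (v ⬝ᵥ v) := by nlinarith
  have hmain : lam q - tlam q ≤ p * x := le_of_mul_le_mul_right hkey hNpos
  have hx6 : (p : ℝ) * x ≤ 6 * r * x := by
    have h1 : (p : ℝ) ≤ r := by exact_mod_cast hpr
    have h2 : (0 : ℝ) ≤ (r : ℝ) := by positivity
    nlinarith
  have hfinal : lam q - tlam q ≤ 6 * r * x := hmain.trans hx6
  exact hfinal.trans (le_max_left _ _)
end

section
/- If there exists T > 0 such that 48·( ‖E‖/T + r(T)·x(T)/σ_min + r(T)·‖E‖²/(T·σ_min) ) < 1, then the least singular value of Ã = A + E satisfies σ̃_min ≥ σ_min/2. -/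
open Matrix

open Finset
open scoped Matrix.Norms.L2Operator

/-! Suppose `Ã v = μ v` with `v ⬝ᵥ v = 1` and `|μ| < σ_min / 2`; write `c i = u i ⬝ᵥ v` and
`B i j = u i ⬝ᵥ E u j`. In the eigenbasis of `A` the eigen-equation reads `(B c) i = (μ - λ i) c i`,
and `|μ - λ i| ≥ |λ i| / 2`. Outside `Λ(T)` this forces `∑_{i ∉ Λ} c i ^ 2 ≤ (2‖E‖/T) ^ 2`.
Inside `Λ(T)`, splitting `(B c) i` along `Λ` and its complement (Cauchy–Schwarz on the latter) gives
`σ_min / 2 * |c i| ≤ x(T) S + 2‖E‖² / T` with `S = ∑_{i ∈ Λ} |c i|`; summing over `Λ` yields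
`S ≤ 2 / 23`. Hence `∑ c i ^ 2 ≤ S ^ 2 + (2‖E‖/T) ^ 2 < 1`, contradicting `v ⬝ᵥ v = 1`. -/

theorem dotProduct_self_eq_norm_sq {κ : Type*} [Fintype κ] (y : κ → ℝ) :
    y ⬝ᵥ y = ‖(WithLp.toLp 2 y : EuclideanSpace ℝ κ)‖ ^ 2 := by
  rw [EuclideanSpace.real_norm_sq_eq]
  simp [dotProduct, sq]

theorem dotProduct_self_mulVec_le {m ι : Type*} [Fintype m] [Fintype ι] [DecidableEq ι]
    (M : Matrix m ι ℝ) (w : ι → ℝ) :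
    (M *ᵥ w) ⬝ᵥ (M *ᵥ w) ≤ ‖M‖ ^ 2 * (w ⬝ᵥ w) := by
  rw [dotProduct_self_eq_norm_sq, dotProduct_self_eq_norm_sq, ← mul_pow]
  exact pow_le_pow_left₀ (norm_nonneg _) (M.l2_opNorm_mulVec (WithLp.toLp 2 w)) 2

theorem dotProduct_mulVec_comm_of_isSymm {ι : Type*} [Fintype ι] {M : Matrix ι ι ℝ}
    (hM : M.IsSymm) (v w : ι → ℝ) : v ⬝ᵥ (M *ᵥ w) = w ⬝ᵥ (M *ᵥ v) := by
  rw [dotProduct_mulVec, ← mulVec_transpose, hM.eq, dotProduct_comm]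

theorem dotProduct_mulVec_of_isSymm_of_mulVec_eq_smul {ι : Type*} [Fintype ι]
    {A : Matrix ι ι ℝ} (hA : A.IsSymm) {x : ι → ℝ} {l : ℝ} (hx : A *ᵥ x = l • x) (w : ι → ℝ) :
    x ⬝ᵥ (A *ᵥ w) = l * (x ⬝ᵥ w) := by
  rw [dotProduct_mulVec_comm_of_isSymm hA, hx, dotProduct_smul, smul_eq_mul, dotProduct_comm]

theorem dotProduct_mulVec_eq_sub_mul_of_mulVec_eq_smul {ι : Type*} [Fintype ι]
    {A E : Matrix ι ι ℝ} (hA : A.IsSymm) {x v : ι → ℝ} {l μ : ℝ} (hx : A *ᵥ x = l • x)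
    (hv : (A + E) *ᵥ v = μ • v) : x ⬝ᵥ (E *ᵥ v) = (μ - l) * (x ⬝ᵥ v) := by
  have h := congrArg (x ⬝ᵥ ·) hv
  simp only [add_mulVec, dotProduct_add, dotProduct_smul, smul_eq_mul,
    dotProduct_mulVec_of_isSymm_of_mulVec_eq_smul hA hx] at h
  linarith

section Orthonormal

variable {ι : Type*} [Fintype ι] [DecidableEq ι] {u : ι → ι → ℝ}

theorem of_transpose_mul_of_eq_one (hu : ∀ i j, u i ⬝ᵥ u j = if i = j then 1 else 0) :
    (of u)ᵀ * of u = 1 := by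
  rw [mul_eq_one_comm]
  ext i j
  simpa [mul_apply, one_apply, dotProduct] using hu i j

theorem sum_sq_dotProduct (hu : ∀ i j, u i ⬝ᵥ u j = if i = j then 1 else 0) (w : ι → ℝ) :
    ∑ i, (u i ⬝ᵥ w) ^ 2 = w ⬝ᵥ w := by
  have : ∑ i, (u i ⬝ᵥ w) ^ 2 = (of u *ᵥ w) ⬝ᵥ (of u *ᵥ w) := by
    simp [dotProduct, mulVec, sq]
  rw [this, dotProduct_mulVec, ← mulVec_transpose, mulVec_mulVec, of_transpose_mul_of_eq_one hu,
    one_mulVec, dotProduct_comm]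

theorem sum_dotProduct_smul (hu : ∀ i j, u i ⬝ᵥ u j = if i = j then 1 else 0) (w : ι → ℝ) :
    ∑ i, (u i ⬝ᵥ w) • u i = w := by
  have : ∑ i, (u i ⬝ᵥ w) • u i = (of u)ᵀ *ᵥ (of u *ᵥ w) := by
    rw [mulVec_transpose, vecMul_eq_sum]
    rfl
  rw [this, mulVec_mulVec, of_transpose_mul_of_eq_one hu, one_mulVec]

theorem dotProduct_mulVec_eq_sum (hu : ∀ i j, u i ⬝ᵥ u j = if i = j then 1 else 0)
    (M : Matrix ι ι ℝ) (w : ι → ℝ) (i : ι) :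
    u i ⬝ᵥ (M *ᵥ w) = ∑ j, (u i ⬝ᵥ (M *ᵥ u j)) * (u j ⬝ᵥ w) := by
  conv_lhs => rw [← sum_dotProduct_smul hu w]
  simp only [mulVec_sum, mulVec_smul, dotProduct_sum, dotProduct_smul, smul_eq_mul, mul_comm]

theorem sum_sq_dotProduct_mulVec_le (hu : ∀ i j, u i ⬝ᵥ u j = if i = j then 1 else 0)
    (M : Matrix ι ι ℝ) (w : ι → ℝ) :
    ∑ i, (u i ⬝ᵥ (M *ᵥ w)) ^ 2 ≤ ‖M‖ ^ 2 * (w ⬝ᵥ w) := by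
  rw [sum_sq_dotProduct hu]
  exact dotProduct_self_mulVec_le M w

theorem sum_sq_dotProduct_mulVec_basis_le (hu : ∀ i j, u i ⬝ᵥ u j = if i = j then 1 else 0)
    {M : Matrix ι ι ℝ} (hM : M.IsSymm) (i : ι) :
    ∑ j, (u i ⬝ᵥ (M *ᵥ u j)) ^ 2 ≤ ‖M‖ ^ 2 := by
  simp only [dotProduct_mulVec_comm_of_isSymm hM (u i)]
  simpa [hu i i] using sum_sq_dotProduct_mulVec_le hu M (u i)

end Orthonormal

theorem abs_div_two_le_abs_sub {μ l s : ℝ} (hμ : |μ| < s / 2) (hs : s ≤ |l|) :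
    |l| / 2 ≤ |μ - l| := by
  have := abs_sub_abs_le_abs_sub l μ
  rw [abs_sub_comm] at this
  linarith

theorem abs_sum_mul_le_of_sum_sq_le {ι : Type*} (s : Finset ι) {f g : ι → ℝ} {a b : ℝ}
    (ha : 0 ≤ a) (hb : 0 ≤ b) (hf : ∑ i ∈ s, f i ^ 2 ≤ a ^ 2) (hg : ∑ i ∈ s, g i ^ 2 ≤ b ^ 2) :
    |∑ i ∈ s, f i * g i| ≤ a * b := by
  refine abs_le_of_sq_le_sq ?_ (mul_nonneg ha hb)
  calc (∑ i ∈ s, f i * g i) ^ 2 ≤ (∑ i ∈ s, f i ^ 2) * ∑ i ∈ s, g i ^ 2 :=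
        sum_mul_sq_le_sq_mul_sq s f g
    _ ≤ a ^ 2 * b ^ 2 := mul_le_mul hf hg (sum_nonneg fun _ _ => sq_nonneg _) (sq_nonneg a)
    _ = (a * b) ^ 2 := (mul_pow a b 2).symm

theorem sq_add_sq_lt_one_of_half_le_mul_add {S a b k : ℝ} (hS : 0 ≤ S) (ha : 0 ≤ a)
    (hb : 0 ≤ b) (hk : 0 ≤ k) (hmass : S / 2 ≤ b * S + 2 * k) (h : 48 * (a + b + k) < 1) :
    S ^ 2 + (2 * a) ^ 2 < 1 := by
  have : S ≤ 2 / 23 := by nlinarith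
  nlinarith

section EigenCoordinates

variable {ι : Type*} [Fintype ι] [DecidableEq ι] (Λ : Finset ι) {c d : ι → ℝ}
  {B : Matrix ι ι ℝ} {T N x s : ℝ}

theorem sum_compl_sq_le (hT : 0 < T) (hcd : ∀ j ∉ Λ, T / 2 * |c j| ≤ |d j|)
    (hd : ∑ j, d j ^ 2 ≤ N ^ 2) : ∑ j ∈ Λᶜ, c j ^ 2 ≤ (2 * N / T) ^ 2 := by
  have hterm : ∀ j ∈ Λᶜ, c j ^ 2 ≤ (2 / T) ^ 2 * d j ^ 2 := by
    intro j hj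
    have h := hcd j (mem_compl.mp hj)
    rw [← sq_abs (c j), ← sq_abs (d j), ← mul_pow]
    refine pow_le_pow_left₀ (abs_nonneg _) ?_ 2
    rw [div_mul_eq_mul_div, le_div_iff₀ hT]
    linarith
  calc ∑ j ∈ Λᶜ, c j ^ 2 ≤ ∑ j ∈ Λᶜ, (2 / T) ^ 2 * d j ^ 2 := sum_le_sum hterm
    _ ≤ (2 / T) ^ 2 * ∑ j, d j ^ 2 := by
        rw [← mul_sum]
        exact mul_le_mul_of_nonneg_left
          (sum_le_univ_sum_of_nonneg fun j => sq_nonneg _) (sq_nonneg _)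
    _ ≤ (2 / T) ^ 2 * N ^ 2 := mul_le_mul_of_nonneg_left hd (sq_nonneg _)
    _ = (2 * N / T) ^ 2 := by ring

theorem abs_mulVec_apply_le (hT : 0 < T) (hN : 0 ≤ N)
    (hcompl : ∑ j ∈ Λᶜ, c j ^ 2 ≤ (2 * N / T) ^ 2) (hrow : ∀ i, ∑ j, B i j ^ 2 ≤ N ^ 2)
    (hx : ∀ i ∈ Λ, ∀ j ∈ Λ, |B i j| ≤ x) {i : ι} (hi : i ∈ Λ) :
    |(B *ᵥ c) i| ≤ x * ∑ j ∈ Λ, |c j| + 2 * N ^ 2 / T := by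
  have hin : |∑ j ∈ Λ, B i j * c j| ≤ x * ∑ j ∈ Λ, |c j| := by
    calc |∑ j ∈ Λ, B i j * c j| ≤ ∑ j ∈ Λ, |B i j| * |c j| := by
          simpa only [abs_mul] using abs_sum_le_sum_abs (fun j => B i j * c j) Λ
      _ ≤ ∑ j ∈ Λ, x * |c j| :=
          sum_le_sum fun j hj => mul_le_mul_of_nonneg_right (hx i hi j hj) (abs_nonneg _)
      _ = x * ∑ j ∈ Λ, |c j| := (mul_sum _ _ _).symm
  have hout : |∑ j ∈ Λᶜ, B i j * c j| ≤ 2 * N ^ 2 / T := by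
    have h := abs_sum_mul_le_of_sum_sq_le Λᶜ hN (by positivity)
      ((sum_le_univ_sum_of_nonneg fun j => sq_nonneg _).trans (hrow i)) hcompl
    convert h using 1
    ring
  calc |(B *ᵥ c) i| = |∑ j ∈ Λ, B i j * c j + ∑ j ∈ Λᶜ, B i j * c j| := by
        rw [sum_add_sum_compl]; rfl
    _ ≤ _ := (abs_add_le _ _).trans (add_le_add hin hout)

theorem sum_sq_lt_one_of_abs_lt_half {lam : ι → ℝ} {μ : ℝ} (hT : 0 < T)
    (hΛ : ∀ i, i ∈ Λ ↔ |lam i| ≤ T) (hs : ∀ i, s ≤ |lam i|) (hμ : |μ| < s / 2)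
    (heig : ∀ i, (B *ᵥ c) i = (μ - lam i) * c i) (hN : 0 ≤ N)
    (hBc : ∑ i, (B *ᵥ c) i ^ 2 ≤ N ^ 2) (hrow : ∀ i, ∑ j, B i j ^ 2 ≤ N ^ 2)
    (hx0 : 0 ≤ x) (hx : ∀ i ∈ Λ, ∀ j ∈ Λ, |B i j| ≤ x)
    (hcond : 48 * (N / T + Λ.card * x / s + Λ.card * N ^ 2 / (T * s)) < 1) :
    ∑ i, c i ^ 2 < 1 := by
  have hs0 : 0 < s := by linarith [abs_nonneg μ]
  have hlam : ∀ i, |lam i| / 2 * |c i| ≤ |(B *ᵥ c) i| := fun i => by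
    rw [heig, abs_mul]
    exact mul_le_mul_of_nonneg_right (abs_div_two_le_abs_sub hμ (hs i)) (abs_nonneg _)
  have hcompl := sum_compl_sq_le Λ hT (fun j hj => by
    have := (hΛ j).not.mp hj
    exact (mul_le_mul_of_nonneg_right (by linarith) (abs_nonneg _)).trans (hlam j)) hBc
  set S := ∑ j ∈ Λ, |c j|
  have hmass : s / 2 * S ≤ Λ.card * (x * S + 2 * N ^ 2 / T) := by
    rw [mul_sum, ← nsmul_eq_mul, ← sum_const]
    refine sum_le_sum fun i hi => ?_
    calc s / 2 * |c i| ≤ |lam i| / 2 * |c i| :=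
          mul_le_mul_of_nonneg_right (by linarith [hs i]) (abs_nonneg _)
      _ ≤ _ := (hlam i).trans (abs_mulVec_apply_le Λ hT hN hcompl hrow hx hi)
  have hmass' : S / 2 ≤ Λ.card * x / s * S + 2 * (Λ.card * N ^ 2 / (T * s)) := by
    calc S / 2 = s / 2 * S / s := by field_simp
      _ ≤ Λ.card * (x * S + 2 * N ^ 2 / T) / s := div_le_div_of_nonneg_right hmass hs0.le
      _ = _ := by ring
  have hS := sq_add_sq_lt_one_of_half_le_mul_add (sum_nonneg fun j _ => abs_nonneg (c j))
    (by positivity) (by positivity) (by positivity) hmass' hcond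
  calc ∑ i, c i ^ 2 = ∑ i ∈ Λ, c i ^ 2 + ∑ i ∈ Λᶜ, c i ^ 2 := (sum_add_sum_compl Λ _).symm
    _ ≤ S ^ 2 + (2 * N / T) ^ 2 := by
        refine add_le_add ?_ hcompl
        simpa only [sq_abs] using sum_sq_le_sq_sum_of_nonneg (fun i _ => abs_nonneg (c i))
    _ < 1 := by rwa [mul_div_assoc]

end EigenCoordinates

theorem least_singular_value_stability_general
    {n : ℕ} (A E : Matrix (Fin n) (Fin n) ℝ)
    (lam tlam : Fin n → ℝ) (u tu : Fin n → (Fin n → ℝ))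
    (hA : A.IsSymm) (hE : E.IsSymm)
    (hu : ∀ i j, u i ⬝ᵥ u j = if i = j then (1 : ℝ) else 0)
    (htu : ∀ i j, tu i ⬝ᵥ tu j = if i = j then (1 : ℝ) else 0)
    (hAu : ∀ i, A *ᵥ u i = lam i • u i)
    (hAtu : ∀ i, (A + E) *ᵥ tu i = tlam i • tu i)
    -- σ_min and σ̃_min, the least singular values of A and Ã :
    (smin tsmin : ℝ)
    (hsmin : IsLeast {t | ∃ i : Fin n, t = |lam i|} smin)
    (htsmin : IsLeast {t | ∃ i : Fin n, t = |tlam i|} tsmin)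
    -- there is T > 0 making the key quantity small :
    (T : ℝ) (hT : 0 < T)
    (Λ : Finset (Fin n)) (hΛ : ∀ i : Fin n, i ∈ Λ ↔ |lam i| ≤ T)
    (xT : ℝ)
    (hxT : IsLUB (insert (0 : ℝ)
      {t | ∃ i ∈ Λ, ∃ j ∈ Λ, t = |u i ⬝ᵥ (E *ᵥ u j)|}) xT)
    (hcond : 48 * (matOpNorm E / T + Λ.card * xT / smin +
      Λ.card * matOpNorm E ^ 2 / (T * smin)) < 1) :
    smin / 2 ≤ tsmin := by
  by_contra! hlt
  obtain ⟨i₀, rfl⟩ := htsmin.1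
  have hv : tu i₀ ⬝ᵥ tu i₀ = 1 := by simpa using htu i₀ i₀
  set c : Fin n → ℝ := fun i => u i ⬝ᵥ tu i₀
  set B : Matrix (Fin n) (Fin n) ℝ := of fun i j => u i ⬝ᵥ (E *ᵥ u j)
  have hBc : ∀ i, (B *ᵥ c) i = u i ⬝ᵥ (E *ᵥ tu i₀) := fun i =>
    (dotProduct_mulVec_eq_sum hu E _ i).symm
  have hsum : ∑ i, c i ^ 2 < 1 :=
    sum_sq_lt_one_of_abs_lt_half Λ (N := ‖E‖) hT hΛ (fun i => hsmin.2 ⟨i, rfl⟩) hlt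
      (fun i => (hBc i).trans
        (dotProduct_mulVec_eq_sub_mul_of_mulVec_eq_smul hA (hAu i) (hAtu i₀)))
      (norm_nonneg E)
      (by simpa only [hBc, hv, mul_one] using sum_sq_dotProduct_mulVec_le hu E (tu i₀))
      (sum_sq_dotProduct_mulVec_basis_le hu hE)
      (hxT.1 (Set.mem_insert 0 _))
      (fun i hi j hj => hxT.1 (Set.mem_insert_of_mem _ ⟨i, hi, j, hj, rfl⟩))
      -- `matOpNorm E` is definitionally the L² operator norm `‖E‖`
      hcond
  exact hsum.ne (by rw [sum_sq_dotProduct hu, hv])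

/-- Theorem 4.6: stability of the least singular value. -/
theorem least_singular_value_stability
    {n : ℕ} (A E : Matrix (Fin n) (Fin n) ℝ)
    (lam tlam : Fin n → ℝ) (u tu : Fin n → (Fin n → ℝ))
    (hA : A.IsSymm) (hE : E.IsSymm)
    (hlam : Antitone lam) (htlam : Antitone tlam)
    (hu : ∀ i j, u i ⬝ᵥ u j = if i = j then (1 : ℝ) else 0)
    (htu : ∀ i j, tu i ⬝ᵥ tu j = if i = j then (1 : ℝ) else 0)
    (hAu : ∀ i, A *ᵥ u i = lam i • u i)
    (hAtu : ∀ i, (A + E) *ᵥ tu i = tlam i • tu i)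
    -- σ_min and σ̃_min, the least singular values of A and Ã :
    (smin tsmin : ℝ)
    (hsmin : IsLeast {t | ∃ i : Fin n, t = |lam i|} smin)
    (htsmin : IsLeast {t | ∃ i : Fin n, t = |tlam i|} tsmin)
    -- A has full rank :
    (hsminpos : 0 < smin)
    -- there is T > 0 making the key quantity small :
    (T : ℝ) (hT : 0 < T)
    (Λ : Finset (Fin n)) (hΛ : ∀ i : Fin n, i ∈ Λ ↔ |lam i| ≤ T)
    (xT : ℝ)
    (hxT : IsLUB (insert (0 : ℝ)
      {t | ∃ i ∈ Λ, ∃ j ∈ Λ, t = |u i ⬝ᵥ (E *ᵥ u j)|}) xT)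
    (hcond : 48 * (matOpNorm E / T + Λ.card * xT / smin +
      Λ.card * matOpNorm E ^ 2 / (T * smin)) < 1) :
    smin / 2 ≤ tsmin :=
  least_singular_value_stability_general A E lam tlam u tu hA hE hu htu hAu hAtu smin tsmin hsmin
    htsmin T hT Λ hΛ xT hxT hcond
end

section
/- Suppose λ̄ ≥ 24‖E‖ and set δ := max{ 12·r·x, 144·r·w²/λ̄ }. Then λ̃_1 − λ_1 ≤ δ/2 = max{ 6·r·x, 72·r·w²/λ̄ }. -/
open Matrix

/-!
Expand the top eigenvector `v = ũ₁` of `A + E` in the eigenbasis of `A` as `v = ∑ cᵢ uᵢ` and split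
it as `p + q`, where `p` collects the indices `i < r` of the `λ̄`-neighbourhood and `q` the rest.
Every eigenvalue outside the neighbourhood is below `λ₁ - λ̄`, so `vᵀAv ≤ λ₁ - λ̄ ‖q‖²`. With
`T = ∑_{i<r} |cᵢ|`, so that `T² ≤ r` by Cauchy–Schwarz, the expansion
`vᵀEv = pᵀEp + 2 qᵀEp + qᵀEq` is at most `x T² + 2 T w ‖q‖ + ‖E‖ ‖q‖²`. As `‖E‖ ≤ λ̄ / 24`, the
bound `λ̃₁ - λ₁ ≤ x T² + 2 T w ‖q‖ - (23/24) λ̄ ‖q‖²` is a concave quadratic in `‖q‖`, and its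
maximum is at most `x r + (24/23) r w² / λ̄`.
-/

lemma mul_le_abs_mul_of_abs_le {a b c : ℝ} (h : |b| ≤ c) : a * b ≤ |a| * c :=
  (le_abs_self _).trans ((abs_mul a b).trans_le (mul_le_mul_of_nonneg_left h (abs_nonneg a)))

section Euclidean

variable {n : ℕ}

lemma dotProduct_eq_inner (a b : Fin n → ℝ) :
    a ⬝ᵥ b = inner ℝ (WithLp.toLp 2 a) (WithLp.toLp 2 b) := by
  simp [EuclideanSpace.inner_toLp_toLp, dotProduct_comm]

lemma vecNorm_eq_norm (v : Fin n → ℝ) : vecNorm v = ‖WithLp.toLp 2 v‖ := by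
  rw [vecNorm, dotProduct_eq_inner, real_inner_self_eq_norm_sq, Real.sqrt_sq (norm_nonneg _)]

lemma vecNorm_sq (v : Fin n → ℝ) : vecNorm v ^ 2 = v ⬝ᵥ v := by
  rw [vecNorm_eq_norm, dotProduct_eq_inner, real_inner_self_eq_norm_sq]

lemma abs_dotProduct_le (a b : Fin n → ℝ) : |a ⬝ᵥ b| ≤ vecNorm a * vecNorm b := by
  rw [dotProduct_eq_inner, vecNorm_eq_norm, vecNorm_eq_norm]
  exact abs_real_inner_le_norm _ _

lemma vecNorm_mulVec_le {m : ℕ} (M : Matrix (Fin m) (Fin n) ℝ) (v : Fin n → ℝ) :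
    vecNorm (M *ᵥ v) ≤ matOpNorm M * vecNorm v := by
  rw [vecNorm_eq_norm, vecNorm_eq_norm]
  exact (LinearMap.toContinuousLinearMap (toEuclideanLin M)).le_opNorm (WithLp.toLp 2 v)

lemma dotProduct_mulVec_le_matOpNorm (M : Matrix (Fin n) (Fin n) ℝ) (v : Fin n → ℝ) :
    v ⬝ᵥ (M *ᵥ v) ≤ matOpNorm M * vecNorm v ^ 2 :=
  calc v ⬝ᵥ (M *ᵥ v) ≤ vecNorm v * vecNorm (M *ᵥ v) := (le_abs_self _).trans (abs_dotProduct_le _ _)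
    _ ≤ vecNorm v * (matOpNorm M * vecNorm v) :=
        mul_le_mul_of_nonneg_left (vecNorm_mulVec_le M v) (Real.sqrt_nonneg _)
    _ = matOpNorm M * vecNorm v ^ 2 := by ring

end Euclidean

lemma Matrix.IsSymm.dotProduct_mulVec_comm {ι : Type*} [Fintype ι] {M : Matrix ι ι ℝ}
    (hM : M.IsSymm) (a b : ι → ℝ) : a ⬝ᵥ (M *ᵥ b) = b ⬝ᵥ (M *ᵥ a) := by
  rw [dotProduct_mulVec, ← mulVec_transpose, hM.eq, dotProduct_comm]

section Orthonormal

variable {n : ℕ} {u : Fin n → Fin n → ℝ}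

lemma sum_dotProduct_smul_of_orthonormal (hu : ∀ i j, u i ⬝ᵥ u j = if i = j then 1 else 0)
    (v : Fin n → ℝ) : ∑ i, (u i ⬝ᵥ v) • u i = v := by
  have hUUt : of u * (of u)ᵀ = 1 := by
    ext i j
    simpa [mul_apply, one_apply, dotProduct] using hu i j
  have hUtU : (of u)ᵀ * of u = 1 := mul_eq_one_comm.mp hUUt
  calc ∑ i, (u i ⬝ᵥ v) • u i = (of u *ᵥ v) ᵥ* of u := by rw [vecMul_eq_sum]; rfl
    _ = v := by rw [← mulVec_transpose, mulVec_mulVec, hUtU, one_mulVec]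

lemma sum_sq_dotProduct_of_orthonormal (hu : ∀ i j, u i ⬝ᵥ u j = if i = j then 1 else 0)
    (v : Fin n → ℝ) : ∑ i, (u i ⬝ᵥ v) ^ 2 = v ⬝ᵥ v := by
  calc ∑ i, (u i ⬝ᵥ v) ^ 2 = (∑ i, (u i ⬝ᵥ v) • u i) ⬝ᵥ v := by simp [sum_dotProduct, sq]
    _ = v ⬝ᵥ v := by rw [sum_dotProduct_smul_of_orthonormal hu v]

lemma sum_smul_dotProduct_sum_smul_of_orthonormal
    (hu : ∀ i j, u i ⬝ᵥ u j = if i = j then 1 else 0) (s : Finset (Fin n)) (a : Fin n → ℝ) :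
    (∑ i ∈ s, a i • u i) ⬝ᵥ (∑ i ∈ s, a i • u i) = ∑ i ∈ s, a i ^ 2 := by
  simp [sum_dotProduct, dotProduct_sum, hu, sq]

lemma dotProduct_mulVec_eq_sum_of_eigenvectors (hu : ∀ i j, u i ⬝ᵥ u j = if i = j then 1 else 0)
    {A : Matrix (Fin n) (Fin n) ℝ} {lam : Fin n → ℝ} (hAu : ∀ i, A *ᵥ u i = lam i • u i)
    (v : Fin n → ℝ) : v ⬝ᵥ (A *ᵥ v) = ∑ i, lam i * (u i ⬝ᵥ v) ^ 2 := by
  calc v ⬝ᵥ (A *ᵥ v) = v ⬝ᵥ (A *ᵥ ∑ i, (u i ⬝ᵥ v) • u i) := by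
        rw [sum_dotProduct_smul_of_orthonormal hu v]
    _ = ∑ i, lam i * (u i ⬝ᵥ v) ^ 2 := by
        simp only [mulVec_sum, mulVec_smul, hAu, smul_smul, dotProduct_comm v, sum_dotProduct,
          smul_dotProduct, smul_eq_mul]
        exact Finset.sum_congr rfl fun i _ => by ring

end Orthonormal

section QuadraticForm

variable {n : ℕ} {M : Matrix (Fin n) (Fin n) ℝ} {u : Fin n → Fin n → ℝ} {s : Finset (Fin n)}
  (a : Fin n → ℝ)

lemma dotProduct_mulVec_sum_smul_le {w : ℝ} (hw : ∀ i ∈ s, vecNorm (M *ᵥ u i) ≤ w)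
    (y : Fin n → ℝ) : y ⬝ᵥ (M *ᵥ ∑ i ∈ s, a i • u i) ≤ (∑ i ∈ s, |a i|) * w * vecNorm y := by
  rw [mulVec_sum, dotProduct_sum, Finset.sum_mul, Finset.sum_mul]
  refine Finset.sum_le_sum fun i hi => ?_
  calc y ⬝ᵥ (M *ᵥ a i • u i) = a i * (y ⬝ᵥ (M *ᵥ u i)) := by
        rw [mulVec_smul, dotProduct_smul, smul_eq_mul]
    _ ≤ |a i| * (vecNorm y * vecNorm (M *ᵥ u i)) :=
        mul_le_abs_mul_of_abs_le (abs_dotProduct_le _ _)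
    _ ≤ |a i| * w * vecNorm y := by
        rw [mul_assoc, mul_comm w]
        exact mul_le_mul_of_nonneg_left
          (mul_le_mul_of_nonneg_left (hw i hi) (Real.sqrt_nonneg _)) (abs_nonneg _)

lemma sum_smul_dotProduct_mulVec_sum_smul_le {x : ℝ}
    (hx : ∀ i ∈ s, ∀ j ∈ s, |u i ⬝ᵥ (M *ᵥ u j)| ≤ x) :
    (∑ i ∈ s, a i • u i) ⬝ᵥ (M *ᵥ ∑ i ∈ s, a i • u i) ≤ x * (∑ i ∈ s, |a i|) ^ 2 := by
  simp only [mulVec_sum, mulVec_smul, dotProduct_sum, sum_dotProduct, smul_dotProduct,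
    dotProduct_smul, smul_eq_mul, sq, Finset.mul_sum, Finset.sum_mul]
  refine Finset.sum_le_sum fun i hi => Finset.sum_le_sum fun j hj => ?_
  calc a i * (a j * (u j ⬝ᵥ (M *ᵥ u i))) = a j * a i * (u j ⬝ᵥ (M *ᵥ u i)) := by ring
    _ ≤ |a j * a i| * x := mul_le_abs_mul_of_abs_le (hx j hj i hi)
    _ = x * (|a j| * |a i|) := by rw [abs_mul, mul_comm]

lemma sum_smul_add_dotProduct_mulVec_le (hM : M.IsSymm) {x w : ℝ}
    (hx : ∀ i ∈ s, ∀ j ∈ s, |u i ⬝ᵥ (M *ᵥ u j)| ≤ x) (hw : ∀ i ∈ s, vecNorm (M *ᵥ u i) ≤ w)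
    (q : Fin n → ℝ) :
    (∑ i ∈ s, a i • u i + q) ⬝ᵥ (M *ᵥ (∑ i ∈ s, a i • u i + q)) ≤
      x * (∑ i ∈ s, |a i|) ^ 2 + 2 * ((∑ i ∈ s, |a i|) * w * vecNorm q) +
        matOpNorm M * vecNorm q ^ 2 := by
  have hpq := hM.dotProduct_mulVec_comm (∑ i ∈ s, a i • u i) q
  rw [mulVec_add, dotProduct_add, add_dotProduct, add_dotProduct, hpq]
  linarith [sum_smul_dotProduct_mulVec_sum_smul_le a hx, dotProduct_mulVec_sum_smul_le a hw q,
    dotProduct_mulVec_le_matOpNorm M q]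

end QuadraticForm

lemma sq_sum_abs_le_card_mul_sum_sq {ι : Type*} [Fintype ι] (s : Finset ι) (c : ι → ℝ) :
    (∑ i ∈ s, |c i|) ^ 2 ≤ s.card * ∑ i, c i ^ 2 := by
  refine sq_sum_le_card_mul_sum_sq.trans (mul_le_mul_of_nonneg_left ?_ (Nat.cast_nonneg _))
  simp only [sq_abs]
  exact Finset.sum_le_sum_of_subset_of_nonneg (Finset.subset_univ s) fun i _ _ => sq_nonneg _

lemma sum_mul_sq_le_of_spectral_gap {ι : Type*} [Fintype ι] [DecidableEq ι] (s : Finset ι)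
    {lam c : ι → ℝ} {l g : ℝ} (hle : ∀ i, lam i ≤ l) (hgap : ∀ i ∉ s, lam i ≤ l - g) :
    ∑ i, lam i * c i ^ 2 ≤ l * ∑ i, c i ^ 2 - g * ∑ i ∈ sᶜ, c i ^ 2 := by
  rw [← Finset.sum_add_sum_compl s, ← Finset.sum_add_sum_compl s (fun i => c i ^ 2), mul_add,
    Finset.mul_sum, Finset.mul_sum, Finset.mul_sum, add_sub_assoc, ← Finset.sum_sub_distrib]
  gcongr with i _ i hi
  · exact hle i
  · rw [← sub_mul]
    exact mul_le_mul_of_nonneg_right (hgap i (Finset.mem_compl.mp hi)) (sq_nonneg _)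

lemma quadratic_perturbation_le_max {x w T t e lb r : ℝ} (hlb : 0 < lb) (hx : 0 ≤ x)
    (he : 24 * e ≤ lb) (hT : T ^ 2 ≤ r) :
    x * T ^ 2 + 2 * (T * w * t) + (e - lb) * t ^ 2 ≤ max (6 * r * x) (72 * r * w ^ 2 / lb) := by
  set M := max (6 * r * x) (72 * r * w ^ 2 / lb)
  have hxM : 6 * r * x ≤ M := le_max_left _ _
  have hwM : 72 * r * w ^ 2 ≤ M * lb := (div_le_iff₀ hlb).mp (le_max_right _ _)
  have hM : 0 ≤ M * lb := le_trans (by nlinarith [sq_nonneg T, sq_nonneg w]) hwM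
  -- AM-GM, with the weights chosen so that the `t ^ 2` terms cancel against `(e - lb) * t ^ 2`
  have amgm : 2 * (T * w * t) * lb ≤ 24 / 23 * (T * w) ^ 2 + 23 / 24 * lb ^ 2 * t ^ 2 := by
    nlinarith [sq_nonneg (T * w - 23 / 24 * lb * t)]
  have hxT : x * T ^ 2 ≤ x * r := mul_le_mul_of_nonneg_left hT hx
  have hwT : (T * w) ^ 2 ≤ r * w ^ 2 := by
    rw [mul_pow]
    exact mul_le_mul_of_nonneg_right hT (sq_nonneg w)
  have het : (e - lb) * t ^ 2 * lb ≤ -(23 / 24) * lb ^ 2 * t ^ 2 := by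
    nlinarith [mul_nonneg (sq_nonneg t) hlb.le]
  refine le_of_mul_le_mul_right ?_ hlb
  nlinarith

/-- Corollary 4.7: upper perturbation bound for the largest eigenvalue. -/
theorem largest_eigenvalue_upper_perturbation
    {n : ℕ} (hn : 1 ≤ n) (A E : Matrix (Fin n) (Fin n) ℝ)
    (hE : E.IsSymm)
    (lam tlam : Fin n → ℝ) (u tu : Fin n → (Fin n → ℝ))
    (hlam : Antitone lam)
    (hu : ∀ i j, u i ⬝ᵥ u j = if i = j then (1 : ℝ) else 0)
    (htu : ∀ i j, tu i ⬝ᵥ tu j = if i = j then (1 : ℝ) else 0)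
    (hAu : ∀ i, A *ᵥ u i = lam i • u i)
    (hAtu : ∀ i, (A + E) *ᵥ tu i = tlam i • tu i)
    (lambar : ℝ) (hlambar : 0 < lambar)
    (hlambarE : 24 * matOpNorm E ≤ lambar)
    -- r = max{ i : λ_1 − λ_i ≤ λ̄ } :
    (r : ℕ)
    (hrchar : ∀ i : Fin n, (i : ℕ) < r ↔ lam ⟨0, by omega⟩ - lam i ≤ lambar)
    (x w : ℝ)
    (hx : IsLUB (insert (0 : ℝ)
      {t | ∃ i j : Fin n, (i : ℕ) < r ∧ (j : ℕ) < r ∧ t = |u i ⬝ᵥ (E *ᵥ u j)|}) x)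
    (hw : IsLUB (insert (0 : ℝ)
      {t | ∃ i : Fin n, (i : ℕ) < r ∧ t = vecNorm (E *ᵥ u i)}) w) :
    tlam ⟨0, by omega⟩ - lam ⟨0, by omega⟩ ≤
      max (6 * r * x) (72 * r * w ^ 2 / lambar) := by
  set i0 : Fin n := ⟨0, by omega⟩
  set S : Finset (Fin n) := {i | (i : ℕ) < r}
  set v := tu i0
  set c : Fin n → ℝ := fun i => u i ⬝ᵥ v
  set q := ∑ i ∈ Sᶜ, c i • u i
  set T := ∑ i ∈ S, |c i|
  have hv : v ⬝ᵥ v = 1 := by simpa using htu i0 i0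
  have hc : ∑ i, c i ^ 2 = 1 := (sum_sq_dotProduct_of_orthonormal hu v).trans hv
  have hq : vecNorm q ^ 2 = ∑ i ∈ Sᶜ, c i ^ 2 := by
    rw [vecNorm_sq, sum_smul_dotProduct_sum_smul_of_orthonormal hu]
  have hT : T ^ 2 ≤ r := by
    refine (sq_sum_abs_le_card_mul_sum_sq S c).trans ?_
    rw [hc, mul_one]
    exact_mod_cast Fin.card_filter_val_lt.trans_le (min_le_right n r)
  have hApart : v ⬝ᵥ (A *ᵥ v) ≤ lam i0 - lambar * vecNorm q ^ 2 := by
    rw [dotProduct_mulVec_eq_sum_of_eigenvectors hu hAu, hq, ← mul_one (lam i0), ← hc]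
    refine sum_mul_sq_le_of_spectral_gap S (fun i => hlam (Nat.zero_le _)) fun i hi => ?_
    have : ¬ lam i0 - lam i ≤ lambar := fun h => hi (by simpa [S] using (hrchar i).mpr h)
    linarith
  have hEpart : v ⬝ᵥ (E *ᵥ v) ≤
      x * T ^ 2 + 2 * (T * w * vecNorm q) + matOpNorm E * vecNorm q ^ 2 := by
    have hpq : ∑ i ∈ S, c i • u i + q = v := by
      rw [Finset.sum_add_sum_compl, sum_dotProduct_smul_of_orthonormal hu]
    rw [← hpq]
    refine sum_smul_add_dotProduct_mulVec_le c hE (fun i hi j hj => hx.1 ?_) (fun i hi => hw.1 ?_) q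
    · exact Or.inr ⟨i, j, by simpa [S] using hi, by simpa [S] using hj, rfl⟩
    · exact Or.inr ⟨i, by simpa [S] using hi, rfl⟩
  have htl : tlam i0 = v ⬝ᵥ (A *ᵥ v) + v ⬝ᵥ (E *ᵥ v) := by
    rw [← dotProduct_add, ← add_mulVec, hAtu, dotProduct_smul, hv, smul_eq_mul, mul_one]
  calc tlam i0 - lam i0
      ≤ x * T ^ 2 + 2 * (T * w * vecNorm q) + (matOpNorm E - lambar) * vecNorm q ^ 2 := by
        linarith
    _ ≤ _ := quadratic_perturbation_le_max hlambar (hx.1 (Set.mem_insert _ _)) hlambarE hT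
end

section
/- Set μ := E( (E u₁)·(E u₂) ) = Σ_{i=1}^n u_{1i}·u_{2i}·( Σ_{l=1}^n σ_{li}² ). Then E( (E u₁)·(E u₂) )² ≤ 5·n·m₄ + μ². In particular, if E is regular (Σ_{l=1}^n σ_{li}² is the same for every i), then μ = 0 and E( (E u₁)·(E u₂) )² ≤ 5·n·m₄. -/
/-!
Write `(E u₁)·(E u₂) = ∑ₖ aₖ bₖ` with `aₖ = (E u₁)ₖ`, `bₖ = (E u₂)ₖ`. The summands depend on
distinct rows, hence are independent, so `𝔼[(∑ₖ aₖ bₖ)²] ≤ (𝔼[∑ₖ aₖ bₖ])² + ∑ₖ 𝔼[aₖ² bₖ²]`.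
By AM–GM `aₖ² bₖ² ≤ (aₖ⁴ + bₖ⁴) / 2`, and for a unit vector `u` and independent centred `ξᵢ`
the fourth moment of a linear form satisfies
`𝔼[(∑ᵢ ξᵢ uᵢ)⁴] ≤ ∑ᵢ uᵢ⁴ 𝔼ξᵢ⁴ + 3 (∑ᵢ uᵢ² 𝔼ξᵢ²)² ≤ 4 ∑ᵢ uᵢ² 𝔼ξᵢ⁴`.
Summing over the rows, every column sum `∑ₖ 𝔼ξₖᵢ⁴` is at most `n m₄`, so `∑ₖ 𝔼[aₖ² bₖ²] ≤ 4 n m₄`.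
-/

open Matrix MeasureTheory ProbabilityTheory

variable {Ω : Type*} [MeasurableSpace Ω] {P : Measure Ω}

lemma ProbabilityTheory.iIndepFun.indepFun_rows {ι κ β : Type*} [Fintype κ] [MeasurableSpace β]
    {f : ι × κ → Ω → β} (h : iIndepFun f P) (hf : ∀ q, Measurable (f q)) {i i' : ι}
    (hii' : i ≠ i') :
    IndepFun (fun ω j => f (i, j) ω) (fun ω j => f (i', j) ω) P := by
  have hdisj : Disjoint ({i} ×ˢ Finset.univ : Finset (ι × κ)) ({i'} ×ˢ Finset.univ) := by
    simp [Finset.disjoint_left, hii'.symm]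
  exact (h.indepFun_finset _ _ hdisj hf).comp (φ := fun v j => v ⟨(i, j), by simp⟩)
    (ψ := fun v j => v ⟨(i', j), by simp⟩)
    (measurable_pi_lambda _ fun _ => measurable_pi_apply _)
    (measurable_pi_lambda _ fun _ => measurable_pi_apply _)

lemma integral_sum_mul_mul_sum_mul {ι : Type*} [Fintype ι] {ξ : ι → Ω → ℝ}
    (hindep : Pairwise fun i j => IndepFun (ξ i) (ξ j) P)
    (hmean : ∀ i, ∫ ω, ξ i ω ∂P = 0) (hL2 : ∀ i, MemLp (ξ i) 2 P) (u v : ι → ℝ) :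
    ∫ ω, (∑ i, ξ i ω * u i) * (∑ j, ξ j ω * v j) ∂P = ∑ i, u i * v i * ∫ ω, ξ i ω ^ 2 ∂P := by
  have hint : ∀ i j, Integrable (fun ω => ξ i ω * u i * (ξ j ω * v j)) P := fun i j => by
    simpa [mul_mul_mul_comm] using ((hL2 i).integrable_mul (hL2 j)).mul_const (u i * v j)
  simp_rw [Finset.sum_mul_sum]
  rw [integral_finsetSum _ fun i _ => integrable_finsetSum _ fun j _ => hint i j]
  refine Finset.sum_congr rfl fun i _ => ?_
  rw [integral_finsetSum _ fun j _ => hint i j, Finset.sum_eq_single i]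
  · simp_rw [mul_mul_mul_comm, ← sq]
    rw [integral_mul_const, mul_comm]
  · intro j _ hji
    simp_rw [mul_mul_mul_comm]
    rw [integral_mul_const, (hindep hji.symm).integral_fun_mul_eq_mul_integral
      (hL2 i).aestronglyMeasurable (hL2 j).aestronglyMeasurable, hmean i, zero_mul, zero_mul]
  · simp

section Moments

variable [IsProbabilityMeasure P]

lemma MeasureTheory.MemLp.integrable_pow_of_le {f : Ω → ℝ} {p k : ℕ} (hf : MemLp f p P)
    (hk : k ≤ p) : Integrable (fun ω => f ω ^ k) P := by
  have hfk : MemLp f k P := hf.mono_exponent (by exact_mod_cast hk)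
  refine hfk.integrable_norm_pow'.mono' (hf.aestronglyMeasurable.pow k) ?_
  exact ae_of_all _ fun ω => by simp [norm_pow]

lemma sq_integral_sq_le_integral_pow_four {f : Ω → ℝ} (hf : MemLp f 4 P) :
    (∫ ω, f ω ^ 2 ∂P) ^ 2 ≤ ∫ ω, f ω ^ 4 ∂P := by
  have hf2 : MemLp (fun ω => f ω ^ 2) 2 P :=
    (memLp_two_iff_integrable_sq (hf.aestronglyMeasurable.pow 2)).2
      (by simpa [← pow_mul] using hf.integrable_pow_of_le (p := 4) le_rfl)
  have := variance_nonneg (fun ω => f ω ^ 2) P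
  rw [variance_eq_sub hf2] at this
  simpa [← pow_mul, sub_nonneg] using this

lemma integral_sq_sum_le_of_pairwise_indepFun {ι : Type*} {X : ι → Ω → ℝ} {s : Finset ι}
    (hX : ∀ i ∈ s, MemLp (X i) 2 P)
    (hindep : Set.Pairwise ↑s fun i j => IndepFun (X i) (X j) P) :
    ∫ ω, (∑ i ∈ s, X i ω) ^ 2 ∂P ≤
      ∑ i ∈ s, ∫ ω, X i ω ^ 2 ∂P + (∫ ω, ∑ i ∈ s, X i ω ∂P) ^ 2 := by
  have hvar := IndepFun.variance_sum hX hindep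
  rw [variance_eq_sub (memLp_finsetSum' s hX)] at hvar
  have hle : ∑ i ∈ s, variance (X i) P ≤ ∑ i ∈ s, ∫ ω, X i ω ^ 2 ∂P :=
    Finset.sum_le_sum fun i hi => variance_le_expectation_sq (hX i hi).aestronglyMeasurable
  simp only [Finset.sum_apply, Pi.pow_apply] at hvar
  linarith

lemma integral_add_pow_four_of_indepFun {S Y : Ω → ℝ} (hSY : IndepFun S Y P)
    (hS : MemLp S 4 P) (hY : MemLp Y 4 P) (hSmean : ∫ ω, S ω ∂P = 0)
    (hYmean : ∫ ω, Y ω ∂P = 0) :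
    ∫ ω, (S ω + Y ω) ^ 4 ∂P =
      ∫ ω, S ω ^ 4 ∂P + 6 * (∫ ω, S ω ^ 2 ∂P) * (∫ ω, Y ω ^ 2 ∂P) + ∫ ω, Y ω ^ 4 ∂P := by
  have hpow : ∀ m ≤ 4, IndepFun (fun ω => S ω ^ m) (fun ω => Y ω ^ (4 - m)) P := fun m _ =>
    hSY.comp (measurable_id.pow_const m) (measurable_id.pow_const (4 - m))
  have hint : ∀ m ∈ Finset.range (4 + 1),
      Integrable (fun ω => S ω ^ m * Y ω ^ (4 - m) * (Nat.choose 4 m : ℝ)) P := fun m hm => by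
    have hm : m ≤ 4 := Nat.lt_succ_iff.mp (Finset.mem_range.mp hm)
    exact ((hpow m hm).integrable_mul (hS.integrable_pow_of_le hm)
      (hY.integrable_pow_of_le (Nat.sub_le 4 m))).mul_const _
  simp_rw [add_pow]
  rw [integral_finsetSum _ hint]
  -- each binomial term factors by independence; the odd ones contain `𝔼 S = 0` or `𝔼 Y = 0`
  have hterm : ∀ m ∈ Finset.range (4 + 1),
      ∫ ω, S ω ^ m * Y ω ^ (4 - m) * (Nat.choose 4 m : ℝ) ∂P =
        (∫ ω, S ω ^ m ∂P) * (∫ ω, Y ω ^ (4 - m) ∂P) * Nat.choose 4 m := fun m hm => by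
    rw [integral_mul_const, (hpow m (Nat.lt_succ_iff.mp (Finset.mem_range.mp hm))
      ).integral_fun_mul_eq_mul_integral (hS.aestronglyMeasurable.pow m)
      (hY.aestronglyMeasurable.pow _)]
  rw [Finset.sum_congr rfl hterm]
  norm_num [Finset.sum_range_succ, hSmean, hYmean, Nat.choose]
  ring

lemma integral_sum_pow_four_le {ι : Type*} {Y : ι → Ω → ℝ} (hindep : iIndepFun Y P)
    (hmeas : ∀ i, Measurable (Y i)) (hmean : ∀ i, ∫ ω, Y i ω ∂P = 0)
    (hL4 : ∀ i, MemLp (Y i) 4 P) (s : Finset ι) :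
    ∫ ω, (∑ i ∈ s, Y i ω) ^ 4 ∂P ≤
      ∑ i ∈ s, ∫ ω, Y i ω ^ 4 ∂P + 3 * (∑ i ∈ s, ∫ ω, Y i ω ^ 2 ∂P) ^ 2 := by
  classical
  induction s using Finset.induction_on with
  | empty => simp
  | insert j s hj ih =>
    set S : Ω → ℝ := fun ω => ∑ i ∈ s, Y i ω with hS
    have hSY : IndepFun S (Y j) P := by
      simpa [hS, Finset.sum_fn] using hindep.indepFun_finsetSum_of_notMem hmeas hj
    have hS4 : MemLp S 4 P := memLp_finsetSum s fun i _ => hL4 i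
    have hSmean : ∫ ω, S ω ∂P = 0 := by
      rw [integral_finsetSum s fun i _ => (hL4 i).integrable (by norm_num)]
      exact Finset.sum_eq_zero fun i _ => hmean i
    have hS2 : ∫ ω, S ω ^ 2 ∂P ≤ ∑ i ∈ s, ∫ ω, Y i ω ^ 2 ∂P := by
      have := integral_sq_sum_le_of_pairwise_indepFun (s := s) (X := Y)
        (fun i _ => (hL4 i).mono_exponent (by norm_num))
        (fun i _ i' _ hii' => hindep.indepFun hii')
      rwa [hSmean, sq, zero_mul, add_zero] at this
    simp_rw [Finset.sum_insert hj, add_comm (Y j _)]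
    rw [integral_add_pow_four_of_indepFun hSY hS4 (hL4 j) hSmean (hmean j)]
    have hY2 : 0 ≤ ∫ ω, Y j ω ^ 2 ∂P := integral_nonneg fun ω => sq_nonneg _
    have hS2' : 0 ≤ ∫ ω, S ω ^ 2 ∂P := integral_nonneg fun ω => sq_nonneg _
    nlinarith

lemma integral_sum_mul_pow_four_le {ι : Type*} [Fintype ι] {ξ : ι → Ω → ℝ}
    (hindep : iIndepFun ξ P) (hmeas : ∀ i, Measurable (ξ i))
    (hmean : ∀ i, ∫ ω, ξ i ω ∂P = 0) (hL4 : ∀ i, MemLp (ξ i) 4 P) (u : ι → ℝ) :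
    ∫ ω, (∑ i, ξ i ω * u i) ^ 4 ∂P ≤ 4 * (u ⬝ᵥ u) * ∑ i, u i ^ 2 * ∫ ω, ξ i ω ^ 4 ∂P := by
  have hsum := integral_sum_pow_four_le (Y := fun i ω => ξ i ω * u i)
    (hindep.comp (fun i x => x * u i) fun i => measurable_id.mul_const _)
    (fun i => (hmeas i).mul_const _) (fun i => by simp [integral_mul_const, hmean i])
    (fun i => (hL4 i).mul_const (u i)) Finset.univ
  simp only [mul_pow, integral_mul_const] at hsum
  have huu : u ⬝ᵥ u = ∑ i, u i ^ 2 := by simp [dotProduct, sq]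
  have hCS : (∑ i, (∫ ω, ξ i ω ^ 2 ∂P) * u i ^ 2) ^ 2 ≤
      (u ⬝ᵥ u) * ∑ i, u i ^ 2 * ∫ ω, ξ i ω ^ 4 ∂P :=
    calc (∑ i, (∫ ω, ξ i ω ^ 2 ∂P) * u i ^ 2) ^ 2
        = (∑ i, u i * (u i * ∫ ω, ξ i ω ^ 2 ∂P)) ^ 2 := by
          congr 1; exact Finset.sum_congr rfl fun i _ => by ring
      _ ≤ (∑ i, u i ^ 2) * ∑ i, (u i * ∫ ω, ξ i ω ^ 2 ∂P) ^ 2 :=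
          Finset.sum_mul_sq_le_sq_mul_sq _ _ _
      _ ≤ (u ⬝ᵥ u) * ∑ i, u i ^ 2 * ∫ ω, ξ i ω ^ 4 ∂P := by
          rw [huu]
          gcongr with i
          rw [mul_pow]
          exact mul_le_mul_of_nonneg_left (sq_integral_sq_le_integral_pow_four (hL4 i))
            (sq_nonneg _)
  have hfourth : ∑ i, (∫ ω, ξ i ω ^ 4 ∂P) * u i ^ 4 ≤
      (u ⬝ᵥ u) * ∑ i, u i ^ 2 * ∫ ω, ξ i ω ^ 4 ∂P := by
    rw [Finset.mul_sum]
    refine Finset.sum_le_sum fun i _ => ?_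
    have hui : u i ^ 2 ≤ u ⬝ᵥ u :=
      huu ▸ Finset.single_le_sum (fun j _ => sq_nonneg (u j)) (Finset.mem_univ i)
    have hκ4 : 0 ≤ ∫ ω, ξ i ω ^ 4 ∂P := integral_nonneg fun ω => by positivity
    nlinarith [mul_le_mul_of_nonneg_left hui (mul_nonneg hκ4 (sq_nonneg (u i)))]
  linarith

end Moments

instance : ENNReal.HolderTriple 4 4 2 :=
  ⟨by rw [← ENNReal.add_halves (2 : ENNReal)⁻¹, ENNReal.div_eq_inv_mul,
    ← ENNReal.mul_inv (by simp) (by simp)]; norm_num⟩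

section RandomMatrix

variable {n : ℕ} {E : Ω → Matrix (Fin n) (Fin n) ℝ}

lemma memLp_mulVec_apply {p : ENNReal} (hL : ∀ i j, MemLp (fun ω => E ω i j) p P)
    (w : Fin n → ℝ) (k : Fin n) : MemLp (fun ω => (E ω *ᵥ w) k) p P :=
  memLp_finsetSum Finset.univ fun i _ => (hL k i).mul_const (w i)

lemma indepFun_mulVec_mul_mulVec
    (hmeas : ∀ i j, Measurable (fun ω => E ω i j))
    (hindep : iIndepFun (fun (q : Fin n × Fin n) ω => E ω q.1 q.2) P)
    (u v : Fin n → ℝ) {k k' : Fin n} (hkk' : k ≠ k') :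
    IndepFun (fun ω => (E ω *ᵥ u) k * (E ω *ᵥ v) k)
      (fun ω => (E ω *ᵥ u) k' * (E ω *ᵥ v) k') P :=
  (hindep.indepFun_rows (fun q => hmeas q.1 q.2) hkk').comp
    (φ := fun r => (r ⬝ᵥ u) * (r ⬝ᵥ v)) (ψ := fun r => (r ⬝ᵥ u) * (r ⬝ᵥ v))
    (by fun_prop) (by fun_prop)

lemma integral_mulVec_mul_mulVec
    (hindep : iIndepFun (fun (q : Fin n × Fin n) ω => E ω q.1 q.2) P)
    (hmean : ∀ i j, ∫ ω, E ω i j ∂P = 0) (hL2 : ∀ i j, MemLp (fun ω => E ω i j) 2 P)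
    (u v : Fin n → ℝ) (k : Fin n) :
    ∫ ω, (E ω *ᵥ u) k * (E ω *ᵥ v) k ∂P = ∑ i, u i * v i * ∫ ω, E ω k i ^ 2 ∂P :=
  integral_sum_mul_mul_sum_mul (ξ := fun i ω => E ω k i)
    (fun i j hij => hindep.indepFun (i := (k, i)) (j := (k, j)) (by simpa using hij))
    (hmean k) (hL2 k) u v

lemma integral_dotProduct_mulVec
    (hindep : iIndepFun (fun (q : Fin n × Fin n) ω => E ω q.1 q.2) P)
    (hmean : ∀ i j, ∫ ω, E ω i j ∂P = 0) (hL2 : ∀ i j, MemLp (fun ω => E ω i j) 2 P)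
    (u v : Fin n → ℝ) :
    ∫ ω, (E ω *ᵥ u) ⬝ᵥ (E ω *ᵥ v) ∂P = ∑ i, u i * v i * ∑ l, ∫ ω, E ω l i ^ 2 ∂P := by
  have hint : ∀ k, Integrable (fun ω => (E ω *ᵥ u) k * (E ω *ᵥ v) k) P := fun k =>
    (memLp_mulVec_apply hL2 u k).integrable_mul (memLp_mulVec_apply hL2 v k)
  simp_rw [dotProduct]
  rw [integral_finsetSum _ fun k _ => hint k]
  simp_rw [integral_mulVec_mul_mulVec hindep hmean hL2, Finset.mul_sum]
  exact Finset.sum_comm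

lemma sum_integral_pow_four_le_of_isGreatest {m4 : ℝ}
    (hm4 : IsGreatest {t | ∃ i : Fin n, t = (1 / n) *
      max (∑ j, ∫ ω, (E ω i j) ^ 4 ∂P) (∑ j, ∫ ω, (E ω j i) ^ 4 ∂P)} m4) (i : Fin n) :
    ∑ k, ∫ ω, E ω k i ^ 4 ∂P ≤ n * m4 := by
  have hn : (0 : ℝ) < n := by exact_mod_cast i.pos
  have hi := hm4.2 ⟨i, rfl⟩
  rw [one_div, inv_mul_le_iff₀ hn] at hi
  exact (le_max_right _ _).trans hi

variable [IsProbabilityMeasure P]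

lemma integral_sq_mulVec_mul_mulVec_le
    (hmeas : ∀ i j, Measurable (fun ω => E ω i j))
    (hindep : iIndepFun (fun (q : Fin n × Fin n) ω => E ω q.1 q.2) P)
    (hmean : ∀ i j, ∫ ω, E ω i j ∂P = 0) (hL4 : ∀ i j, MemLp (fun ω => E ω i j) 4 P)
    (u v : Fin n → ℝ) (k : Fin n) :
    ∫ ω, ((E ω *ᵥ u) k * (E ω *ᵥ v) k) ^ 2 ∂P ≤
      2 * (u ⬝ᵥ u) * ∑ i, u i ^ 2 * ∫ ω, E ω k i ^ 4 ∂P +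
        2 * (v ⬝ᵥ v) * ∑ i, v i ^ 2 * ∫ ω, E ω k i ^ 4 ∂P := by
  have hrow : iIndepFun (fun i ω => E ω k i) P :=
    hindep.precomp (g := fun i => (k, i)) (Prod.mk_right_injective k)
  have hfour : ∀ w : Fin n → ℝ, ∫ ω, (E ω *ᵥ w) k ^ 4 ∂P ≤
      4 * (w ⬝ᵥ w) * ∑ i, w i ^ 2 * ∫ ω, E ω k i ^ 4 ∂P := fun w =>
    integral_sum_mul_pow_four_le hrow (hmeas k) (hmean k) (hL4 k) w
  have hint : ∀ w : Fin n → ℝ, Integrable (fun ω => (E ω *ᵥ w) k ^ 4) P := fun w =>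
    (memLp_mulVec_apply hL4 w k).integrable_pow_of_le le_rfl
  have hamgm : ∀ ω, ((E ω *ᵥ u) k * (E ω *ᵥ v) k) ^ 2 ≤
      ((E ω *ᵥ u) k ^ 4 + (E ω *ᵥ v) k ^ 4) / 2 := fun ω => by
    nlinarith [sq_nonneg ((E ω *ᵥ u) k ^ 2 - (E ω *ᵥ v) k ^ 2)]
  calc ∫ ω, ((E ω *ᵥ u) k * (E ω *ᵥ v) k) ^ 2 ∂P
      ≤ ∫ ω, ((E ω *ᵥ u) k ^ 4 + (E ω *ᵥ v) k ^ 4) / 2 ∂P :=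
        integral_mono_of_nonneg (ae_of_all _ fun ω => sq_nonneg _)
          (((hint u).add (hint v)).div_const 2) (ae_of_all _ hamgm)
    _ = ((∫ ω, (E ω *ᵥ u) k ^ 4 ∂P) + ∫ ω, (E ω *ᵥ v) k ^ 4 ∂P) / 2 := by
        rw [integral_div, integral_add (hint u) (hint v)]
    _ ≤ _ := by linarith [hfour u, hfour v]

lemma sum_integral_sq_mulVec_mul_mulVec_le
    (hmeas : ∀ i j, Measurable (fun ω => E ω i j))
    (hindep : iIndepFun (fun (q : Fin n × Fin n) ω => E ω q.1 q.2) P)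
    (hmean : ∀ i j, ∫ ω, E ω i j ∂P = 0) (hL4 : ∀ i j, MemLp (fun ω => E ω i j) 4 P)
    {m4 : ℝ} (hm4 : IsGreatest {t | ∃ i : Fin n, t = (1 / n) *
      max (∑ j, ∫ ω, (E ω i j) ^ 4 ∂P) (∑ j, ∫ ω, (E ω j i) ^ 4 ∂P)} m4)
    {u v : Fin n → ℝ} (hu : u ⬝ᵥ u = 1) (hv : v ⬝ᵥ v = 1) :
    ∑ k, ∫ ω, ((E ω *ᵥ u) k * (E ω *ᵥ v) k) ^ 2 ∂P ≤ 4 * n * m4 := by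
  have hcol : ∀ w : Fin n → ℝ, w ⬝ᵥ w = 1 →
      ∑ k, ∑ i, w i ^ 2 * ∫ ω, E ω k i ^ 4 ∂P ≤ n * m4 := fun w hw => by
    rw [Finset.sum_comm]
    calc ∑ i, ∑ k, w i ^ 2 * ∫ ω, E ω k i ^ 4 ∂P
        ≤ ∑ i, w i ^ 2 * (n * m4) := by
          simp_rw [← Finset.mul_sum]
          gcongr with i
          exact sum_integral_pow_four_le_of_isGreatest hm4 i
      _ = n * m4 := by
          rw [← Finset.sum_mul, show ∑ i, w i ^ 2 = 1 by simpa [dotProduct, sq] using hw, one_mul]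
  calc ∑ k, ∫ ω, ((E ω *ᵥ u) k * (E ω *ᵥ v) k) ^ 2 ∂P
      ≤ ∑ k, (2 * ∑ i, u i ^ 2 * ∫ ω, E ω k i ^ 4 ∂P +
          2 * ∑ i, v i ^ 2 * ∫ ω, E ω k i ^ 4 ∂P) :=
        Finset.sum_le_sum fun k _ => by
          simpa [hu, hv] using integral_sq_mulVec_mul_mulVec_le hmeas hindep hmean hL4 u v k
    _ ≤ 4 * n * m4 := by
        rw [Finset.sum_add_distrib, ← Finset.mul_sum, ← Finset.mul_sum]
        linarith [hcol u hu, hcol v hv]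

end RandomMatrix

theorem second_moment_Eu1_Eu2_bound_general
    {n : ℕ}
    {Ω : Type} [MeasurableSpace Ω] (P : Measure Ω) [IsProbabilityMeasure P]
    (E : Ω → Matrix (Fin n) (Fin n) ℝ)
    (hmeas : ∀ i j, Measurable (fun ω => E ω i j))
    -- all entries are independent :
    (hindep : iIndepFun
      (fun (q : Fin n × Fin n) ω => E ω q.1 q.2) P)
    -- mean zero, finite fourth moments :
    (hmean : ∀ i j, ∫ ω, E ω i j ∂P = 0)
    (hL4 : ∀ i j, MemLp (fun ω => E ω i j) 4 P)
    (m4 : ℝ)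
    (hm4 : IsGreatest {t | ∃ i : Fin n, t = (1 / n) *
      max (∑ j, ∫ ω, (E ω i j) ^ 4 ∂P) (∑ j, ∫ ω, (E ω j i) ^ 4 ∂P)} m4)
    (u1 u2 : Fin n → ℝ)
    (hu1 : u1 ⬝ᵥ u1 = 1) (hu2 : u2 ⬝ᵥ u2 = 1) (hu12 : u1 ⬝ᵥ u2 = 0) :
    (∫ ω, (E ω *ᵥ u1) ⬝ᵥ (E ω *ᵥ u2) ∂P =
        ∑ i, u1 i * u2 i * (∑ l, ∫ ω, (E ω l i) ^ 2 ∂P)) ∧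
    (∫ ω, ((E ω *ᵥ u1) ⬝ᵥ (E ω *ᵥ u2)) ^ 2 ∂P ≤
        5 * n * m4 + (∫ ω, (E ω *ᵥ u1) ⬝ᵥ (E ω *ᵥ u2) ∂P) ^ 2) ∧
    ((∀ i i' : Fin n, (∑ l, ∫ ω, (E ω l i) ^ 2 ∂P) =
        ∑ l, ∫ ω, (E ω l i') ^ 2 ∂P) →
      (∫ ω, (E ω *ᵥ u1) ⬝ᵥ (E ω *ᵥ u2) ∂P = 0 ∧
        ∫ ω, ((E ω *ᵥ u1) ⬝ᵥ (E ω *ᵥ u2)) ^ 2 ∂P ≤ 5 * n * m4)) := by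
  have hL2 : ∀ i j, MemLp (fun ω => E ω i j) 2 P := fun i j =>
    (hL4 i j).mono_exponent (by norm_num)
  have hfirst := integral_dotProduct_mulVec hindep hmean hL2 u1 u2
  have hsecond : ∫ ω, ((E ω *ᵥ u1) ⬝ᵥ (E ω *ᵥ u2)) ^ 2 ∂P ≤
      5 * n * m4 + (∫ ω, (E ω *ᵥ u1) ⬝ᵥ (E ω *ᵥ u2) ∂P) ^ 2 := by
    have hsplit : ∫ ω, ((E ω *ᵥ u1) ⬝ᵥ (E ω *ᵥ u2)) ^ 2 ∂P ≤
        ∑ k, ∫ ω, ((E ω *ᵥ u1) k * (E ω *ᵥ u2) k) ^ 2 ∂P +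
          (∫ ω, (E ω *ᵥ u1) ⬝ᵥ (E ω *ᵥ u2) ∂P) ^ 2 :=
      integral_sq_sum_le_of_pairwise_indepFun (s := Finset.univ)
        (fun k _ => (memLp_mulVec_apply hL4 u2 k).mul' (memLp_mulVec_apply hL4 u1 k))
        (fun k _ k' _ hkk' => indepFun_mulVec_mul_mulVec hmeas hindep u1 u2 hkk')
    have hrows := sum_integral_sq_mulVec_mul_mulVec_le hmeas hindep hmean hL4 hm4 hu1 hu2
    have hnm4 : 0 ≤ n * m4 := by
      obtain ⟨i, -⟩ := hm4.1
      exact (Finset.sum_nonneg fun k _ => integral_nonneg fun ω => by positivity).trans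
        (sum_integral_pow_four_le_of_isGreatest hm4 i)
    linarith
  refine ⟨hfirst, hsecond, fun hreg => ?_⟩
  have hzero : ∫ ω, (E ω *ᵥ u1) ⬝ᵥ (E ω *ᵥ u2) ∂P = 0 := by
    rw [hfirst]
    rcases isEmpty_or_nonempty (Fin n) with hempty | ⟨⟨i₀⟩⟩
    · simp
    · simp_rw [hreg _ i₀, ← Finset.sum_mul]
      rw [show ∑ i, u1 i * u2 i = 0 from hu12, zero_mul]
  exact ⟨hzero, by simpa [hzero] using hsecond⟩

/-- Lemma 7.4 / Appendix A.1: second-moment bound for `(E u₁)·(E u₂)`. -/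
theorem second_moment_Eu1_Eu2_bound
    {n : ℕ} (hn : 0 < n)
    {Ω : Type} [MeasurableSpace Ω] (P : Measure Ω) [IsProbabilityMeasure P]
    (E : Ω → Matrix (Fin n) (Fin n) ℝ)
    (hmeas : ∀ i j, Measurable (fun ω => E ω i j))
    -- all entries are independent :
    (hindep : iIndepFun
      (fun (q : Fin n × Fin n) ω => E ω q.1 q.2) P)
    -- mean zero, finite fourth moments :
    (hmean : ∀ i j, ∫ ω, E ω i j ∂P = 0)
    (hL4 : ∀ i j, MemLp (fun ω => E ω i j) 4 P)
    (m4 : ℝ)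
    (hm4 : IsGreatest {t | ∃ i : Fin n, t = (1 / n) *
      max (∑ j, ∫ ω, (E ω i j) ^ 4 ∂P) (∑ j, ∫ ω, (E ω j i) ^ 4 ∂P)} m4)
    (u1 u2 : Fin n → ℝ)
    (hu1 : u1 ⬝ᵥ u1 = 1) (hu2 : u2 ⬝ᵥ u2 = 1) (hu12 : u1 ⬝ᵥ u2 = 0) :
    (∫ ω, (E ω *ᵥ u1) ⬝ᵥ (E ω *ᵥ u2) ∂P =
        ∑ i, u1 i * u2 i * (∑ l, ∫ ω, (E ω l i) ^ 2 ∂P)) ∧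
    (∫ ω, ((E ω *ᵥ u1) ⬝ᵥ (E ω *ᵥ u2)) ^ 2 ∂P ≤
        5 * n * m4 + (∫ ω, (E ω *ᵥ u1) ⬝ᵥ (E ω *ᵥ u2) ∂P) ^ 2) ∧
    ((∀ i i' : Fin n, (∑ l, ∫ ω, (E ω l i) ^ 2 ∂P) =
        ∑ l, ∫ ω, (E ω l i') ^ 2 ∂P) →
      (∫ ω, (E ω *ᵥ u1) ⬝ᵥ (E ω *ᵥ u2) ∂P = 0 ∧
        ∫ ω, ((E ω *ᵥ u1) ⬝ᵥ (E ω *ᵥ u2)) ^ 2 ∂P ≤ 5 * n * m4)) :=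
  second_moment_Eu1_Eu2_bound_general P E hmeas hindep hmean hL4 m4 hm4 u1 u2 hu1 hu2 hu12
end

section
/- Let s ≥ 1, 0 ≤ T ≤ s+1, c ∈ ℂ, R > 0, and let a_1, …, a_{s+1} ∈ ℂ (not necessarily distinct) satisfy |a_j − c| < R for 1 ≤ j ≤ T and |a_j − c| > R for T+1 ≤ j ≤ s+1. Then (1/(2πi)) ∮_{|z−c|=R} dz / ∏_{j=1}^{s+1} (z − a_j) = (−1)^{T+1} · Σ_L w(L), where the sum ranges over all compositions L of s of length T; in particular the integral vanishes when T = 0 or T = s+1, the sum then being empty. -/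
/-!
Write `P_n(z) = ∏_{j=1}^{n} (z - a_j)`. Partial fractions,
`1 / ((z - x) Q (z - y)) = (x - y)⁻¹ (1 / ((z - x) Q) - 1 / (Q (z - y)))`, express the integral of
`1 / P_{s+1}` through two integrals with one point fewer: one drops the outer point `a_{s+1}`,
the other the inner point `a_1`. Sorting the compositions of `s` by whether their first part is `1`
gives the same recurrence for the sums of weights. The recursion ends when all points lie outside
the circle (Cauchy's theorem), when all lie inside (the integrand is `O(|z|⁻²)`, so the integral
over large circles vanishes), or at the simple pole `s = T = 1`.
-/

open Finset Metric Filter Topology Real Complex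

section Analytic

variable {ι : Type*} {t : Finset ι} {a : ι → ℂ} {c : ℂ} {R : ℝ}

lemma differentiableAt_prod_sub_inv {z : ℂ} (h : ∀ i ∈ t, z ≠ a i) :
    DifferentiableAt ℂ (fun z => (∏ i ∈ t, (z - a i))⁻¹) z :=
  (DifferentiableAt.fun_finsetProd fun i _ => differentiableAt_id.sub_const (a i)).inv
    (prod_ne_zero_iff.2 fun i hi => sub_ne_zero.2 (h i hi))

lemma circleIntegrable_prod_sub_inv (hR : 0 ≤ R) (h : ∀ i ∈ t, ‖a i - c‖ ≠ R) :
    CircleIntegrable (fun z => (∏ i ∈ t, (z - a i))⁻¹) c R :=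
  ContinuousOn.circleIntegrable hR fun z hz =>
    (differentiableAt_prod_sub_inv fun i hi hzi =>
      h i hi (by rw [← hzi]; exact mem_sphere_iff_norm.1 hz)).continuousAt.continuousWithinAt

lemma circleIntegral_prod_sub_inv_eq_zero_of_forall_lt_norm (hR : 0 ≤ R)
    (h : ∀ i ∈ t, R < ‖a i - c‖) : ∮ z in C(c, R), (∏ i ∈ t, (z - a i))⁻¹ = 0 := by
  have hd : ∀ z ∈ closedBall c R, DifferentiableAt ℂ (fun z => (∏ i ∈ t, (z - a i))⁻¹) z :=
    fun z hz => differentiableAt_prod_sub_inv fun i hi hzi =>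
      (h i hi).not_ge (hzi ▸ mem_closedBall_iff_norm.1 hz)
  exact circleIntegral_eq_zero_of_differentiable_on_off_countable hR Set.countable_empty
    (fun z hz => (hd z hz).continuousAt.continuousWithinAt)
    fun z hz => hd z (ball_subset_closedBall hz.1)

lemma circleIntegral_eq_zero_of_norm_le_div_sq {E : Type*} [NormedAddCommGroup E]
    [NormedSpace ℂ E] {f : ℂ → E} {C R₀ : ℝ} (hR : 0 < R)
    (hf : ∀ z, R ≤ ‖z - c‖ → DifferentiableAt ℂ f z)
    (hC : ∀ z, R₀ ≤ ‖z - c‖ → ‖f z‖ ≤ C / ‖z - c‖ ^ 2) :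
    ∮ z in C(c, R), f z = 0 := by
  have hf' : ∀ r, ∀ z ∈ closedBall c r \ ball c R, DifferentiableAt ℂ f z := fun r z hz =>
    hf z (not_lt.1 fun h => hz.2 (mem_ball_iff_norm.2 h))
  have hradius : ∀ r, R ≤ r → ∮ z in C(c, r), f z = ∮ z in C(c, R), f z := fun r hr =>
    circleIntegral_eq_of_differentiable_on_annulus_off_countable hR hr Set.countable_empty
      (fun z hz => (hf' r z hz).continuousAt.continuousWithinAt)
      fun z hz => hf' r z
        ⟨ball_subset_closedBall hz.1.1, fun h => hz.1.2 (ball_subset_closedBall h)⟩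
  have hbound : ∀ r, max R R₀ ≤ r → ‖∮ z in C(c, R), f z‖ ≤ 2 * π * C / r := by
    intro r hr
    have hr0 : 0 < r := hR.trans_le (le_of_max_le_left hr)
    rw [← hradius r (le_of_max_le_left hr)]
    calc _ ≤ 2 * π * r * (C / r ^ 2) :=
          circleIntegral.norm_integral_le_of_norm_le_const hr0.le fun z hz => by
            rw [← mem_sphere_iff_norm.1 hz]
            exact hC z ((le_of_max_le_right hr).trans (mem_sphere_iff_norm.1 hz).ge)
      _ = 2 * π * C / r := by field_simp
  have hlim : Tendsto (fun r : ℝ => 2 * π * C / r) atTop (𝓝 0) :=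
    tendsto_const_nhds.div_atTop tendsto_id
  exact norm_le_zero_iff.1 (ge_of_tendsto hlim (eventually_atTop.2 ⟨_, hbound⟩))

lemma circleIntegral_prod_sub_inv_eq_zero_of_two_le_card (hR : 0 < R) (ht : 2 ≤ #t)
    (h : ∀ i ∈ t, ‖a i - c‖ < R) : ∮ z in C(c, R), (∏ i ∈ t, (z - a i))⁻¹ = 0 := by
  refine circleIntegral_eq_zero_of_norm_le_div_sq (C := 4) (R₀ := max (2 * R) 2) hR
    (fun z hz => differentiableAt_prod_sub_inv fun i hi hzi => (h i hi).not_ge (hzi ▸ hz))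
    fun z hz => ?_
  set ρ := ‖z - c‖
  have hρ : 2 * R ≤ ρ ∧ 2 ≤ ρ := max_le_iff.1 hz
  have hfactor : ∀ i ∈ t, ρ / 2 ≤ ‖z - a i‖ := fun i hi => by
    linarith [norm_sub_le_norm_sub_add_norm_sub z (a i) c, h i hi]
  have hprod : (ρ / 2) ^ 2 ≤ ‖∏ i ∈ t, (z - a i)‖ :=
    calc (ρ / 2) ^ 2 ≤ (ρ / 2) ^ #t := pow_le_pow_right₀ (by linarith) ht
      _ = ∏ i ∈ t, ρ / 2 := (prod_const _).symm
      _ ≤ ∏ i ∈ t, ‖z - a i‖ := prod_le_prod (fun _ _ => by positivity) hfactor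
      _ = ‖∏ i ∈ t, (z - a i)‖ := (norm_prod _ _).symm
  calc ‖(∏ i ∈ t, (z - a i))⁻¹‖ ≤ ((ρ / 2) ^ 2)⁻¹ := by
        rw [norm_inv]; exact inv_anti₀ (pow_pos (by linarith) 2) hprod
    _ = 4 / ρ ^ 2 := by ring

end Analytic

lemma Finset.prod_Icc_one_succ {M : Type*} [CommMonoid M] (f : ℕ → M) (n : ℕ) :
    ∏ j ∈ Icc 1 (n + 1), f j = f 1 * ∏ j ∈ Icc 1 n, f (j + 1) := by
  rw [← mul_prod_Ioc_eq_prod_Icc (by omega), ← Icc_add_one_left_eq_Ioc, ← map_add_right_Icc,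
    prod_map]
  rfl

lemma prod_Icc_sub_inv_succ_succ {a : ℕ → ℂ} {n : ℕ} {z : ℂ}
    (hz : ∀ j ∈ Icc 1 (n + 2), z ≠ a j) (h1 : a 1 ≠ a (n + 2)) :
    (∏ j ∈ Icc 1 (n + 2), (z - a j))⁻¹ = (a 1 - a (n + 2))⁻¹ *
      ((∏ j ∈ Icc 1 (n + 1), (z - a j))⁻¹ - (∏ j ∈ Icc 1 (n + 1), (z - a (j + 1)))⁻¹) := by
  set Q := ∏ j ∈ Icc 1 n, (z - a (j + 1))
  have hfirst : ∏ j ∈ Icc 1 (n + 1), (z - a j) = (z - a 1) * Q := prod_Icc_one_succ _ n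
  have hlast : ∏ j ∈ Icc 1 (n + 1), (z - a (j + 1)) = Q * (z - a (n + 2)) :=
    prod_Icc_succ_top (by omega) _
  have hall : ∏ j ∈ Icc 1 (n + 2), (z - a j) = (z - a 1) * Q * (z - a (n + 2)) := by
    rw [prod_Icc_succ_top (by omega), hfirst]
  have hne : (z - a 1) * Q * (z - a (n + 2)) ≠ 0 :=
    hall ▸ prod_ne_zero_iff.2 fun j hj => sub_ne_zero.2 (hz j hj)
  obtain ⟨⟨hx, hQ⟩, hy⟩ := mul_ne_zero_iff.1 hne |>.imp_left mul_ne_zero_iff.1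
  have hxy : a 1 - a (n + 2) ≠ 0 := sub_ne_zero.2 h1
  rw [hall, hfirst, hlast]
  field_simp
  ring

lemma circleIntegral_prod_Icc_sub_inv_succ_succ {a : ℕ → ℂ} {n : ℕ} {c : ℂ} {R : ℝ}
    (hR : 0 ≤ R) (hsphere : ∀ j ∈ Icc 1 (n + 2), ‖a j - c‖ ≠ R) (h1 : a 1 ≠ a (n + 2)) :
    ∮ z in C(c, R), (∏ j ∈ Icc 1 (n + 2), (z - a j))⁻¹ = (a 1 - a (n + 2))⁻¹ *
      ((∮ z in C(c, R), (∏ j ∈ Icc 1 (n + 1), (z - a j))⁻¹) -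
        ∮ z in C(c, R), (∏ j ∈ Icc 1 (n + 1), (z - a (j + 1)))⁻¹) := by
  have hint : CircleIntegrable (fun z => (∏ j ∈ Icc 1 (n + 1), (z - a j))⁻¹) c R :=
    circleIntegrable_prod_sub_inv hR fun j hj => hsphere j (by simp at hj ⊢; omega)
  have hint' : CircleIntegrable (fun z => (∏ j ∈ Icc 1 (n + 1), (z - a (j + 1)))⁻¹) c R :=
    circleIntegrable_prod_sub_inv hR fun j hj => hsphere (j + 1) (by simp at hj ⊢; omega)
  rw [← circleIntegral.integral_sub hint hint', ← circleIntegral.integral_const_mul]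
  refine circleIntegral.integral_congr hR fun z hz => prod_Icc_sub_inv_succ_succ
    (fun j hj hzj => hsphere j hj ?_) h1
  rw [← hzj]
  exact mem_sphere_iff_norm.1 hz

theorem Finset.Nat.sum_antidiagonalTuple_succ {M : Type*} [AddCommMonoid M] (k n : ℕ)
    (f : (Fin (k + 1) → ℕ) → M) :
    ∑ m ∈ antidiagonalTuple (k + 1) n, f m =
      ∑ p ∈ antidiagonal n, ∑ m ∈ antidiagonalTuple k p.2, f (Fin.cons p.1 m) := by
  simp only [Finset.sum, antidiagonalTuple, Multiset.Nat.antidiagonalTuple,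
    List.Nat.antidiagonalTuple, Multiset.map_coe, Multiset.sum_coe, List.flatMap,
    List.map_flatten, List.sum_flatten, List.map_map, Function.comp_def]
  rfl

section Compositions

variable {T : ℕ}

/-- `prefixExcess m k` is the paper's `M_k = (m_1 - 1) + ⋯ + (m_k - 1)`. -/
def prefixExcess (m : Fin T → ℕ) (k : ℕ) : ℕ :=
  ∑ q ∈ univ.filter (fun q : Fin T => (q : ℕ) < k), (m q - 1)

/-- The weight `w(L)` of a composition of `s`, with the blocks indexed from `0`. -/
noncomputable def compositionWeight (s : ℕ) (a : ℕ → ℂ) (m : Fin T → ℕ) : ℂ :=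
  ∏ q ∈ range T, ∏ j ∈ Icc ((s + 1) - prefixExcess m (q + 1)) ((s + 1) - prefixExcess m q),
    (a (q + 1) - a j)⁻¹

noncomputable def compositionSum (s T : ℕ) (a : ℕ → ℂ) : ℂ :=
  ∑ m ∈ (Nat.antidiagonalTuple T s).filter (fun m => ∀ q, 1 ≤ m q), compositionWeight s a m

lemma prefixExcess_zero (m : Fin T → ℕ) : prefixExcess m 0 = 0 := by
  simp [prefixExcess]

lemma prefixExcess_cons_succ (m₀ : ℕ) (m : Fin T → ℕ) (k : ℕ) :
    prefixExcess (Fin.cons m₀ m : Fin (T + 1) → ℕ) (k + 1) = (m₀ - 1) + prefixExcess m k := by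
  simp [prefixExcess, sum_filter, Fin.sum_univ_succ]

lemma prefixExcess_le_sum (m : Fin T → ℕ) (k : ℕ) : prefixExcess m k ≤ ∑ q, m q :=
  calc prefixExcess m k ≤ ∑ q ∈ univ.filter (fun q : Fin T => (q : ℕ) < k), m q :=
        sum_le_sum fun _ _ => Nat.sub_le _ _
    _ ≤ ∑ q, m q := sum_le_sum_of_subset (filter_subset _ _)

lemma compositionWeight_cons {k r : ℕ} (a : ℕ → ℂ) (m : Fin T → ℕ) (hm : ∑ q, m q ≤ r) :
    compositionWeight (k + r + 1) a (Fin.cons (k + 1) m : Fin (T + 1) → ℕ) =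
      (∏ j ∈ Icc (r + 2) (k + r + 2), (a 1 - a j)⁻¹) *
        compositionWeight r (fun j => a (j + 1)) m := by
  rw [compositionWeight, prod_range_succ', compositionWeight, mul_comm]
  simp only [prefixExcess_cons_succ, prefixExcess_zero, add_tsub_cancel_right, zero_add,
    tsub_zero]
  congr 1
  · rw [show k + r + 1 + 1 - (k + 0) = r + 2 by omega]
  · refine prod_congr rfl fun q _ => ?_
    have h₁ := (prefixExcess_le_sum m q).trans hm
    have h₂ := (prefixExcess_le_sum m (q + 1)).trans hm
    rw [show k + r + 1 + 1 - (k + prefixExcess m (q + 1)) = r + 1 - prefixExcess m (q + 1) + 1 by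
        omega,
      show k + r + 1 + 1 - (k + prefixExcess m q) = r + 1 - prefixExcess m q + 1 by omega,
      ← map_add_right_Icc, prod_map]
    rfl

lemma compositionSum_succ_succ (s T : ℕ) (a : ℕ → ℂ) :
    compositionSum (s + 1) (T + 1) a = ∑ p ∈ antidiagonal s,
      (∏ j ∈ Icc (p.2 + 2) (s + 2), (a 1 - a j)⁻¹) * compositionSum p.2 T (fun j => a (j + 1)) := by
  rw [compositionSum, sum_filter, Nat.sum_antidiagonalTuple_succ, Nat.sum_antidiagonal_succ]
  simp only [Fin.forall_fin_succ, Fin.cons_zero, Fin.cons_succ, Nat.le_zero, one_ne_zero,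
    false_and, if_false, sum_const_zero, zero_add]
  refine sum_congr rfl fun ⟨k, r⟩ hp => ?_
  rw [HasAntidiagonal.mem_antidiagonal] at hp
  subst hp
  rw [compositionSum, sum_filter, mul_sum]
  refine sum_congr rfl fun m hm => ?_
  simp only [le_add_iff_nonneg_left, zero_le, true_and]
  split_ifs
  · exact compositionWeight_cons a m (Nat.mem_antidiagonalTuple.1 hm).le
  · rw [mul_zero]

lemma compositionSum_add_two_succ (s T : ℕ) (a : ℕ → ℂ) :
    compositionSum (s + 2) (T + 1) a = (a 1 - a (s + 3))⁻¹ *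
      (compositionSum (s + 1) (T + 1) a + compositionSum (s + 1) T (fun j => a (j + 1))) := by
  rw [compositionSum_succ_succ (s + 1), Nat.sum_antidiagonal_succ, compositionSum_succ_succ s,
    mul_add, mul_sum, add_comm]
  simp only [Icc_self, prod_singleton]
  congr 1
  refine sum_congr rfl fun p hp => ?_
  rw [prod_Icc_succ_top (by have := HasAntidiagonal.mem_antidiagonal.1 hp; omega)]
  ring

lemma compositionSum_succ_zero (s : ℕ) (a : ℕ → ℂ) : compositionSum (s + 1) 0 a = 0 := by
  simp [compositionSum]

lemma compositionSum_eq_zero_of_lt {s T : ℕ} (h : s < T) (a : ℕ → ℂ) :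
    compositionSum s T a = 0 := by
  refine sum_eq_zero fun m hm => absurd ?_ h.not_ge
  rw [mem_filter, Nat.mem_antidiagonalTuple] at hm
  calc T = ∑ _q : Fin T, 1 := by simp
    _ ≤ ∑ q, m q := sum_le_sum fun q _ => hm.2 q
    _ = s := hm.1

lemma compositionSum_one_one (a : ℕ → ℂ) : compositionSum 1 1 a = (a 1 - a 2)⁻¹ := by
  rw [compositionSum_succ_succ]
  simp [compositionSum, compositionWeight]

end Compositions

theorem circleIntegral_prod_Icc_sub_inv_eq_compositionSum {c : ℂ} {R : ℝ} (hR : 0 < R) (s : ℕ) :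
    ∀ (T : ℕ) (a : ℕ → ℂ), T ≤ s + 2 → (∀ j, 1 ≤ j → j ≤ T → ‖a j - c‖ < R) →
      (∀ j, T + 1 ≤ j → j ≤ s + 2 → R < ‖a j - c‖) →
      ∮ z in C(c, R), (∏ j ∈ Icc 1 (s + 2), (z - a j))⁻¹ =
        2 * π * I * ((-1) ^ (T + 1) * compositionSum (s + 1) T a) := by
  induction s using Nat.strong_induction_on with
  | _ s ih =>
  intro T a hT hin hout
  rcases Nat.eq_zero_or_pos T with rfl | hT₀
  · rw [circleIntegral_prod_sub_inv_eq_zero_of_forall_lt_norm hR.le fun j hj =>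
      hout j (by simp at hj; omega) (mem_Icc.1 hj).2, compositionSum_succ_zero, mul_zero, mul_zero]
  rcases hT.eq_or_lt with rfl | hTs
  · rw [circleIntegral_prod_sub_inv_eq_zero_of_two_le_card hR (by simp) fun j hj =>
      hin j (mem_Icc.1 hj).1 (mem_Icc.1 hj).2, compositionSum_eq_zero_of_lt (by omega),
      mul_zero, mul_zero]
  obtain ⟨T, rfl⟩ : ∃ T', T = T' + 1 := ⟨T - 1, by omega⟩
  have hsphere : ∀ j ∈ Icc 1 (s + 2), ‖a j - c‖ ≠ R := fun j hj => by
    rcases le_or_gt j (T + 1) with h | h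
    · exact (hin j (mem_Icc.1 hj).1 h).ne
    · exact (hout j h (mem_Icc.1 hj).2).ne'
  have h₁ : a 1 ≠ a (s + 2) := fun h =>
    (hin 1 le_rfl (by omega)).not_gt (h ▸ hout (s + 2) (by omega) le_rfl)
  rw [circleIntegral_prod_Icc_sub_inv_succ_succ hR.le hsphere h₁]
  rcases s with _ | s
  · obtain rfl : T = 0 := by omega
    have hpole : ∮ z in C(c, R), (∏ j ∈ Icc 1 1, (z - a j))⁻¹ = 2 * π * I := by
      simpa using circleIntegral.integral_sub_inv_of_mem_ball
        (mem_ball_iff_norm.2 (hin 1 le_rfl le_rfl))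
    have hregular : ∮ z in C(c, R), (∏ j ∈ Icc 1 1, (z - a (j + 1)))⁻¹ = 0 :=
      circleIntegral_prod_sub_inv_eq_zero_of_forall_lt_norm hR.le fun j hj => by
        obtain rfl : j = 1 := by simpa using hj
        exact hout 2 le_rfl le_rfl
    rw [hpole, hregular, compositionSum_one_one]
    ring
  · rw [ih s (by omega) (T + 1) a (by omega) hin (fun j hj _ => hout j hj (by omega)),
      ih s (by omega) T (fun j => a (j + 1)) (by omega)
        (fun j hj hj' => hin (j + 1) (by omega) (by omega))
        (fun j hj hj' => hout (j + 1) (by omega) (by omega)),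
      compositionSum_add_two_succ]
    ring

/-- Lemma 7.3: combinatorial evaluation of the contour integral
`(2πi)⁻¹ ∮ dz / ∏_{j=1}^{s+1} (z − a_j)` as a signed sum over compositions. -/
theorem contour_integral_composition_expansion
    (s T : ℕ) (hs : 1 ≤ s) (hT : T ≤ s + 1)
    (c : ℂ) (R : ℝ) (hR : 0 < R)
    (a : ℕ → ℂ)
    (hin : ∀ j, 1 ≤ j → j ≤ T → ‖a j - c‖ < R)
    (hout : ∀ j, T + 1 ≤ j → j ≤ s + 1 → R < ‖a j - c‖) :
    (1 / (2 * (Real.pi : ℂ) * Complex.I)) *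
      circleIntegral (fun z => (∏ j ∈ Finset.Icc 1 (s + 1), (z - a j))⁻¹) c R =
    (-1 : ℂ) ^ (T + 1) *
      ∑ m ∈ (Finset.Nat.antidiagonalTuple T s).filter (fun m => ∀ q, 1 ≤ m q),
        ∏ q ∈ Finset.range T,
          ∏ j ∈ Finset.Icc
              ((s + 1) -
                ∑ q' ∈ Finset.univ.filter (fun q' : Fin T => (q' : ℕ) < q + 1),
                  (m q' - 1))
              ((s + 1) -
                ∑ q' ∈ Finset.univ.filter (fun q' : Fin T => (q' : ℕ) < q),
                  (m q' - 1)),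
            (a (q + 1) - a j)⁻¹ := by
  obtain ⟨n, rfl⟩ : ∃ n, s = n + 1 := ⟨s - 1, by omega⟩
  have h2πI : 2 * (π : ℂ) * I ≠ 0 := by simp [pi_ne_zero, I_ne_zero]
  calc _ = 1 / (2 * π * I) * (2 * π * I * ((-1) ^ (T + 1) * compositionSum (n + 1) T a)) :=
        congrArg _ (circleIntegral_prod_Icc_sub_inv_eq_compositionSum hR n T a hT hin hout)
    _ = (-1) ^ (T + 1) * compositionSum (n + 1) T a := by field_simp
end
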